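/- arXiv:1903.04358 — 3 statements merged into one kernel-verified Lean document; each statement's English description precedes it below -/
import Mathlib

section
/- Let E ⊂ X be μ-measurable. Then the 1-fine interior of the complement of the measure-theoretic interior of E equals the 1-fine interior of the measure-theoretic exterior of E: fine-int(X ∖ I_E) = fine-int(O_E). -/
open MeasureTheory Metric Filter
open scoped ENNReal NNReal Topology

noncomputable section

namespace Lahti

variable {X : Type*} [MetricSpace X] [MeasurableSpace X]

/-- A curve: a rectifiable continuous map from `[0, len]` to `X`,
parametrized by arc length (hence `1`-Lipschitz on `[0, len]`). -/
structure Curve (X : Type*) [MetricSpace X] where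
  len : ℝ
  len_nonneg : 0 ≤ len
  toFun : ℝ → X
  lipschitz : LipschitzOnWith 1 toFun (Set.Icc 0 len)

/-- The curve `γ` lies in the set `A`. -/
def Curve.In (γ : Curve X) (A : Set X) : Prop :=
  ∀ t ∈ Set.Icc (0:ℝ) γ.len, γ.toFun t ∈ A

/-- The curve integral `∫_γ g ds` for a curve parametrized by arc length. -/
def curveIntegral (g : X → ℝ≥0∞) (γ : Curve X) : ℝ≥0∞ :=
  ∫⁻ t in Set.Icc (0:ℝ) γ.len, g (γ.toFun t)

/-- The upper gradient inequality for the pair `(u, g)` on the curve `γ`. -/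
def ugIneq (u : X → ℝ) (g : X → ℝ≥0∞) (γ : Curve X) : Prop :=
  ENNReal.ofReal |u (γ.toFun 0) - u (γ.toFun γ.len)| ≤ curveIntegral g γ

/-- `g` is an upper gradient of `u` on `X`. -/
def IsUpperGradient (u : X → ℝ) (g : X → ℝ≥0∞) : Prop :=
  Measurable g ∧ ∀ γ : Curve X, ugIneq u g γ

/-- The 1-modulus of a family of curves. -/
def Mod1 (μ : Measure X) (Γ : Set (Curve X)) : ℝ≥0∞ :=
  ⨅ (ρ : X → ℝ≥0∞) (_ : Measurable ρ ∧ ∀ γ ∈ Γ, 1 ≤ curveIntegral ρ γ),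
    ∫⁻ x, ρ x ∂μ

/-- `g` is a 1-weak upper gradient of `u` in `A`: the upper gradient inequality
holds on 1-a.e. curve in `A`. -/
def IsWUG (μ : Measure X) (u : X → ℝ) (g : X → ℝ≥0∞) (A : Set X) : Prop :=
  Measurable g ∧ Mod1 μ {γ : Curve X | γ.In A ∧ ¬ ugIneq u g γ} = 0

/-- `g` is locally integrable on `A` (in the sense `L¹_loc(A)` of the paper). -/
def LocIntOn (μ : Measure X) (g : X → ℝ≥0∞) (A : Set X) : Prop :=
  ∀ x ∈ A, ∃ r > 0, ∫⁻ y in A ∩ ball x r, g y ∂μ < ∞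

/-- `g` is the minimal 1-weak upper gradient of `u` in `A`. -/
def IsMinWUG (μ : Measure X) (u : X → ℝ) (g : X → ℝ≥0∞) (A : Set X) : Prop :=
  IsWUG μ u g A ∧ ∀ g' : X → ℝ≥0∞, IsWUG μ u g' A → LocIntOn μ g' A →
    ∀ᵐ x ∂(μ.restrict A), g x ≤ g' x

/-- `∫_A g_u dμ`, where `g_u` is the minimal 1-weak upper gradient of `u` in `A`:
equivalently, the infimum of `∫_A g dμ` over all 1-weak upper gradients `g` of `u` in `A`. -/
def eD1 (μ : Measure X) (u : X → ℝ) (A : Set X) : ℝ≥0∞ :=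
  ⨅ (g : X → ℝ≥0∞) (_ : IsWUG μ u g A), ∫⁻ x in A, g x ∂μ

/-- The `L¹(A)` (semi)norm. -/
def eL1 (μ : Measure X) (u : X → ℝ) (A : Set X) : ℝ≥0∞ :=
  ∫⁻ x in A, ENNReal.ofReal |u x| ∂μ

/-- The Newtonian `N^{1,1}(A)` (semi)norm. -/
def eN11 (μ : Measure X) (u : X → ℝ) (A : Set X) : ℝ≥0∞ :=
  eL1 μ u A + eD1 μ u A

/-- `u ∈ N^{1,1}(A)`. -/
def MemN11 (μ : Measure X) (u : X → ℝ) (A : Set X) : Prop :=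
  Measurable u ∧ eN11 μ u A < ∞

/-- `u ∈ N^{1,1}_0(D, A)`: Newtonian functions with zero boundary values. -/
def MemN11Zero (μ : Measure X) (u : X → ℝ) (D A : Set X) : Prop :=
  MemN11 μ u A ∧ ∀ x ∈ A \ D, u x = 0

/-- `u ∈ D^1(A)`: the Dirichlet space. -/
def MemD1 (μ : Measure X) (u : X → ℝ) (A : Set X) : Prop :=
  Measurable u ∧ eD1 μ u A < ∞

/-- `u ∈ D^1_0(D, A)`: Dirichlet functions with zero boundary values. -/
def MemD1Zero (μ : Measure X) (u : X → ℝ) (D A : Set X) : Prop :=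
  MemD1 μ u A ∧ ∀ x ∈ A \ D, u x = 0

/-- The `1`-capacity `capa_1(A)`. -/
def capa1 (μ : Measure X) (A : Set X) : ℝ≥0∞ :=
  ⨅ (u : X → ℝ) (_ : MemN11 μ u Set.univ ∧ ∀ x ∈ A, 1 ≤ u x),
    eN11 μ u Set.univ

/-- The variational 1-capacity `rcapa_1(A, D)`. -/
def rcapa1 (μ : Measure X) (A D : Set X) : ℝ≥0∞ :=
  ⨅ (u : X → ℝ) (_ : MemN11Zero μ u D Set.univ ∧ ∀ x ∈ A, 1 ≤ u x),
    eD1 μ u Set.univ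

/-- The variational 1-capacity `rcapa_1(A, D, U)` relative to an ambient set `U`. -/
def rcapa1Rel (μ : Measure X) (A D U : Set X) : ℝ≥0∞ :=
  ⨅ (u : X → ℝ) (_ : MemN11Zero μ u D U ∧ ∀ x ∈ A ∩ U, u x = 1),
    eD1 μ u U

/-- `U` is 1-quasiopen. -/
def QuasiOpen (μ : Measure X) (U : Set X) : Prop :=
  ∀ ε : ℝ≥0∞, 0 < ε → ∃ G : Set X, IsOpen G ∧ capa1 μ G < ε ∧ IsOpen (U ∪ G)

/-- `A` is 1-thin at `x`. -/
def OneThin (μ : Measure X) (A : Set X) (x : X) : Prop :=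
  Filter.Tendsto
    (fun r : ℝ =>
      ENNReal.ofReal r * rcapa1 μ (A ∩ ball x r) (ball x (2*r)) / μ (ball x r))
    (nhdsWithin (0:ℝ) (Set.Ioi 0)) (nhds 0)

/-- `U` is 1-finely open. -/
def FinelyOpen (μ : Measure X) (U : Set X) : Prop :=
  ∀ x ∈ U, OneThin μ Uᶜ x

/-- The 1-fine interior of `A`. -/
def fineInt (μ : Measure X) (A : Set X) : Set X :=
  ⋃₀ {U : Set X | FinelyOpen μ U ∧ U ⊆ A}

/-- The 1-fine closure of `A`. -/
def fineCl (μ : Measure X) (A : Set X) : Set X :=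
  ⋂₀ {F : Set X | FinelyOpen μ Fᶜ ∧ A ⊆ F}

/-- The restricted Hausdorff content of codimension one. -/
def hContent (μ : Measure X) (R : ℝ) (A : Set X) : ℝ≥0∞ :=
  ⨅ (c : ℕ → X) (r : ℕ → ℝ)
    (_ : (∀ j, 0 ≤ r j ∧ r j ≤ R) ∧ A ⊆ ⋃ j, ball (c j) (r j)),
    ∑' j, μ (ball (c j) (r j)) / ENNReal.ofReal (r j)

/-- The codimension-one Hausdorff measure `ℋ`. -/
def codimH (μ : Measure X) (A : Set X) : ℝ≥0∞ :=
  ⨆ (R : ℝ) (_ : 0 < R), hContent μ R A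

/-- The measure-theoretic interior `I_E`. -/
def mInt (μ : Measure X) (E : Set X) : Set X :=
  {x : X | Filter.Tendsto (fun r : ℝ => μ (ball x r \ E) / μ (ball x r))
    (nhdsWithin (0:ℝ) (Set.Ioi 0)) (nhds 0)}

/-- The measure-theoretic exterior `O_E`. -/
def mExt (μ : Measure X) (E : Set X) : Set X :=
  {x : X | Filter.Tendsto (fun r : ℝ => μ (ball x r ∩ E) / μ (ball x r))
    (nhdsWithin (0:ℝ) (Set.Ioi 0)) (nhds 0)}

/-- The measure-theoretic boundary `∂*E`. -/
def mBdry (μ : Measure X) (E : Set X) : Set X :=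
  (mInt μ E ∪ mExt μ E)ᶜ

/-- `u ∈ N^{1,1}_loc(A)`. -/
def MemN11loc (μ : Measure X) (u : X → ℝ) (A : Set X) : Prop :=
  Measurable u ∧ ∀ x ∈ A, ∃ r > 0, eN11 μ u (A ∩ ball x r) < ∞

/-- `s i → u` in `L¹_loc(A)`. -/
def TendstoL1loc (μ : Measure X) (s : ℕ → X → ℝ) (u : X → ℝ) (A : Set X) : Prop :=
  ∀ x ∈ A, ∃ r > 0,
    Filter.Tendsto (fun i => ∫⁻ y in A ∩ ball x r, ENNReal.ofReal |s i y - u y| ∂μ)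
      Filter.atTop (nhds 0)

/-- The total variation `‖Du‖(Ω)` (for `Ω` open). -/
def totVar (μ : Measure X) (u : X → ℝ) (Ω : Set X) : ℝ≥0∞ :=
  ⨅ (s : ℕ → X → ℝ)
    (_ : (∀ i, MemN11loc μ (s i) Ω) ∧ TendstoL1loc μ s u Ω),
    Filter.atTop.liminf (fun i => eD1 μ (s i) Ω)

/-- `‖Du‖(A)` for an arbitrary set `A`: infimum over open supersets. -/
def totVarSet (μ : Measure X) (u : X → ℝ) (A : Set X) : ℝ≥0∞ :=
  ⨅ (W : Set X) (_ : IsOpen W ∧ A ⊆ W), totVar μ u W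

/-- `‖Du‖(A)` for `A ⊆ Ω`: the value on `A` of the variation measure on `Ω`. -/
def totVarOn (μ : Measure X) (u : X → ℝ) (A Ω : Set X) : ℝ≥0∞ :=
  ⨅ (W : Set X) (_ : IsOpen W ∧ A ⊆ W ∧ W ⊆ Ω), totVar μ u W

/-- The perimeter `P(E, Ω)`. -/
def perim (μ : Measure X) (E : Set X) (Ω : Set X) : ℝ≥0∞ :=
  totVar μ (Set.indicator E fun _ => (1:ℝ)) Ω

/-- `u ∈ BV(Ω)`. -/
def MemBV (μ : Measure X) (u : X → ℝ) (Ω : Set X) : Prop :=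
  AEMeasurable u (μ.restrict Ω) ∧ eL1 μ u Ω < ∞ ∧ totVar μ u Ω < ∞

/-- The upper approximate limit `u^∨(x)`. -/
def uVee (μ : Measure X) (u : X → ℝ) (x : X) : EReal :=
  sInf ((fun t : ℝ => (t : EReal)) ''
    {t : ℝ | Filter.Tendsto (fun r : ℝ => μ (ball x r ∩ {y | t < u y}) / μ (ball x r))
      (nhdsWithin (0:ℝ) (Set.Ioi 0)) (nhds 0)})

/-- The lower approximate limit `u^∧(x)`. -/
def uWedge (μ : Measure X) (u : X → ℝ) (x : X) : EReal :=
  sSup ((fun t : ℝ => (t : EReal)) ''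
    {t : ℝ | Filter.Tendsto (fun r : ℝ => μ (ball x r ∩ {y | u y < t}) / μ (ball x r))
      (nhdsWithin (0:ℝ) (Set.Ioi 0)) (nhds 0)})

/-- The jump set `S_u` (as a subset of `Ω`). -/
def jumpSet (μ : Measure X) (u : X → ℝ) (Ω : Set X) : Set X :=
  {x ∈ Ω | uWedge μ u x < uVee μ u x}

/-- The variational BV-capacity `rcapa_BV(A, D, U)`. -/
def rcapaBV (μ : Measure X) (A D U : Set X) : ℝ≥0∞ :=
  ⨅ (u : X → ℝ)
    (_ : AEMeasurable u (μ.restrict U) ∧ eL1 μ u U < ∞ ∧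
      (∃ Ω', IsOpen Ω' ∧ U ⊆ Ω' ∧ totVar μ u Ω' < ∞) ∧
      codimH μ {x ∈ U \ D | ¬ (uWedge μ u x = (0:EReal) ∧ uVee μ u x = (0:EReal))} = 0 ∧
      codimH μ {x ∈ A ∩ U | ¬ ((1:EReal) ≤ uWedge μ u x)} = 0),
    totVarSet μ u U

/-- The alternative variational BV-capacity `rcapa^∨_BV(A, D, U)`. -/
def rcapaBVvee (μ : Measure X) (A D U : Set X) : ℝ≥0∞ :=
  ⨅ (u : X → ℝ)
    (_ : AEMeasurable u (μ.restrict U) ∧ eL1 μ u U < ∞ ∧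
      (∃ Ω', IsOpen Ω' ∧ U ⊆ Ω' ∧ totVar μ u Ω' < ∞) ∧
      codimH μ {x ∈ U \ D | ¬ (uWedge μ u x = (0:EReal) ∧ uVee μ u x = (0:EReal))} = 0 ∧
      codimH μ {x ∈ A ∩ U | ¬ ((1:EReal) ≤ uVee μ u x)} = 0),
    totVarSet μ u U

/-- `μ` is doubling with constant `Cd`. -/
def Doubling (μ : Measure X) (Cd : ℝ) : Prop :=
  ∀ (x : X) (r : ℝ), 0 < r →
    0 < μ (ball x r) ∧ μ (ball x (2*r)) ≤ ENNReal.ofReal Cd * μ (ball x r) ∧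
      μ (ball x r) < ∞

/-- `X` supports a `(1,1)`-Poincaré inequality with constants `CP` and `lam`. -/
def PoincareInequality (μ : Measure X) (CP lam : ℝ) : Prop :=
  ∀ (x : X) (r : ℝ), 0 < r → ∀ (u : X → ℝ) (g : X → ℝ≥0∞),
    MeasureTheory.LocallyIntegrable u μ → IsUpperGradient u g →
    (∫⁻ y in ball x r, ENNReal.ofReal |u y - ⨍ z in ball x r, u z ∂μ| ∂μ) / μ (ball x r)
      ≤ ENNReal.ofReal (CP * r) *
        ((∫⁻ y in ball x (lam * r), g y ∂μ) / μ (ball x (lam * r)))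


/-! ### Auxiliary lemmas -/

section Aux

variable {μ : Measure X} {Cd : ℝ}

lemma cdE_pos (hCd : 1 ≤ Cd) : (ENNReal.ofReal Cd) ≠ 0 := by
  simp [ENNReal.ofReal_eq_zero]; linarith

lemma cdE_one_le (hCd : 1 ≤ Cd) : (1:ℝ≥0∞) ≤ ENNReal.ofReal Cd :=
  ENNReal.one_le_ofReal.2 hCd

lemma dbl_pow (hdbl : Doubling μ Cd) (y : X) {s : ℝ} (hs : 0 < s) (k : ℕ) :
    μ (ball y (2^k * s)) ≤ (ENNReal.ofReal Cd)^k * μ (ball y s) := by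
  induction k with
  | zero => simp
  | succ n ih =>
    have h2 : (2:ℝ)^(n+1) * s = 2 * (2^n * s) := by ring
    rw [h2]
    calc μ (ball y (2*(2^n*s))) ≤ ENNReal.ofReal Cd * μ (ball y (2^n*s)) :=
          (hdbl y _ (by positivity)).2.1
      _ ≤ ENNReal.ofReal Cd * ((ENNReal.ofReal Cd)^n * μ (ball y s)) :=
          mul_le_mul_right ih _
      _ = (ENNReal.ofReal Cd)^(n+1) * μ (ball y s) := by ring

lemma dbl_of_le (hdbl : Doubling μ Cd) (y : X) {s t : ℝ} (hs : 0 < s) (k : ℕ)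
    (ht : t ≤ 2^k * s) :
    μ (ball y t) ≤ (ENNReal.ofReal Cd)^k * μ (ball y s) :=
  (measure_mono (ball_subset_ball ht)).trans (dbl_pow hdbl y hs k)

lemma no_sep_seq [BorelSpace X] (hCd : 1 ≤ Cd) (hdbl : Doubling μ Cd)
    (x₀ : X) {R ε : ℝ} (hR : 0 < R) (hε : 0 < ε)
    (f : ℕ → X) (hf : ∀ n, f n ∈ ball x₀ R)
    (hsep : ∀ m n, m < n → ε ≤ dist (f m) (f n)) : False := by
  obtain ⟨k, hk⟩ : ∃ k : ℕ, (2*(R+ε))/(ε/2) < 2^k :=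
    pow_unbounded_of_one_lt _ one_lt_two
  have hk' : 2*(R+ε) ≤ 2^k * (ε/2) := ((div_lt_iff₀ (by positivity)).1 hk).le
  set M := μ (ball x₀ (R+ε)) with hM
  have hM0 : M ≠ 0 := ((hdbl x₀ (R+ε) (by linarith)).1).ne'
  have hMt : M ≠ ∞ := ((hdbl x₀ (R+ε) (by linarith)).2.2).ne
  set D := (ENNReal.ofReal Cd)^k with hD
  have hD0 : D ≠ 0 := pow_ne_zero _ (cdE_pos hCd)
  have hDt : D ≠ ∞ := ENNReal.pow_ne_top ENNReal.ofReal_ne_top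
  have hlow : ∀ i, M / D ≤ μ (ball (f i) (ε/2)) := by
    intro i
    have hsub : ball x₀ (R+ε) ⊆ ball (f i) (2*(R+ε)) := by
      intro w hw
      have h1 : dist w x₀ < R + ε := mem_ball.1 hw
      have h2 : dist (f i) x₀ < R := mem_ball.1 (hf i)
      rw [mem_ball]
      have h3 : dist x₀ (f i) < R := by rw [dist_comm]; exact h2
      calc dist w (f i) ≤ dist w x₀ + dist x₀ (f i) := dist_triangle w x₀ (f i)
        _ < (R+ε) + R := by linarith
        _ ≤ 2*(R+ε) := by linarith
    have h3 : M ≤ D * μ (ball (f i) (ε/2)) :=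
      (measure_mono hsub).trans (dbl_of_le hdbl (f i) (by positivity) k hk')
    exact (ENNReal.div_le_iff_le_mul (Or.inl hD0) (Or.inl hDt)).2
      (by rwa [mul_comm] at h3)
  have hdisj : ∀ i j : ℕ, i ≠ j → Disjoint (ball (f i) (ε/2)) (ball (f j) (ε/2)) := by
    intro i j hij
    rcases hij.lt_or_gt with h | h
    · exact ball_disjoint_ball (by linarith [hsep i j h])
    · exact (ball_disjoint_ball (by linarith [hsep j i h])).symm
  have hsum : ∀ N : ℕ, (N : ℝ≥0∞) * (M / D) ≤ M := by
    intro N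
    have h1 : ∑ i ∈ Finset.range N, μ (ball (f i) (ε/2))
        = μ (⋃ i ∈ Finset.range N, ball (f i) (ε/2)) := by
      rw [measure_biUnion_finset ?_ (fun i _ => measurableSet_ball)]
      intro i hi j hj hij
      exact hdisj i j hij
    have h2 : (⋃ i ∈ Finset.range N, ball (f i) (ε/2)) ⊆ ball x₀ (R+ε) := by
      refine Set.iUnion₂_subset fun i _ => ?_
      intro w hw
      have h2 : dist (f i) x₀ < R := mem_ball.1 (hf i)
      rw [mem_ball] at hw ⊢
      calc dist w x₀ ≤ dist w (f i) + dist (f i) x₀ := dist_triangle _ _ _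
        _ < ε/2 + R := by linarith
        _ < R + ε := by linarith
    calc (N : ℝ≥0∞) * (M / D) = ∑ _i ∈ Finset.range N, (M / D) := by
          simp [Finset.sum_const, mul_comm]
      _ ≤ ∑ i ∈ Finset.range N, μ (ball (f i) (ε/2)) :=
          Finset.sum_le_sum (fun i _ => hlow i)
      _ = μ (⋃ i ∈ Finset.range N, ball (f i) (ε/2)) := h1
      _ ≤ M := measure_mono h2
  have hMD0 : M / D ≠ 0 := by
    simp only [ne_eq, ENNReal.div_eq_zero_iff, not_or]
    exact ⟨hM0, hDt⟩
  have hMDt : M / D ≠ ∞ := by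
    exact (ENNReal.div_lt_top hMt hD0).ne
  obtain ⟨N, hN⟩ : ∃ N : ℕ, M / (M / D) < N :=
    ENNReal.exists_nat_gt ((ENNReal.div_lt_top hMt hMD0).ne)
  have : M < N * (M / D) :=
    (ENNReal.div_lt_iff (Or.inl hMD0) (Or.inl hMDt)).1 hN
  exact absurd (hsum N) (by simpa using this.not_ge)

lemma sc_of_doubling [BorelSpace X] (hCd : 1 ≤ Cd) (hdbl : Doubling μ Cd) :
    SecondCountableTopology X := by
  rcases isEmpty_or_nonempty X with h | ⟨⟨x₀⟩⟩
  · exact Metric.secondCountable_of_almost_dense_set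
      (fun ε hε => ⟨∅, Set.countable_empty, fun x => (IsEmpty.false x).elim⟩)
  refine Metric.secondCountable_of_almost_dense_set (fun ε hε => ?_)
  have key : ∀ n : ℕ, ∃ s : Finset X, ∀ x ∈ ball x₀ ((n:ℝ)+1), ∃ y ∈ s, dist x y ≤ ε := by
    intro n
    by_contra hcon
    push_neg at hcon
    choose g hg1 hg2 using hcon
    classical
    set F : ℕ → Finset X := fun m => Nat.rec ∅ (fun _ s => insert (g s) s) m with hF
    have hstep : ∀ m, F (m+1) = insert (g (F m)) (F m) := fun m => rfl
    have hmono : ∀ {a b : ℕ}, a ≤ b → F a ⊆ F b := by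
      intro a b hab
      induction hab with
      | refl => exact Finset.Subset.refl _
      | step h ih => exact ih.trans (by rw [hstep]; exact Finset.subset_insert _ _)
    refine no_sep_seq hCd hdbl x₀ (R := (n:ℝ)+1) (by positivity) hε
      (fun m => g (F m)) (fun m => hg1 _) ?_
    intro m j hmj
    have h1 : g (F m) ∈ F j := hmono hmj (by rw [hstep]; exact Finset.mem_insert_self _ _)
    have h2 := hg2 (F j) (g (F m)) h1
    rw [dist_comm]
    linarith
  choose s hs using key
  refine ⟨⋃ n, (s n : Set X), Set.countable_iUnion (fun n => (s n).countable_toSet), ?_⟩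
  intro x
  obtain ⟨n, hn⟩ := exists_nat_gt (dist x x₀)
  obtain ⟨y, hy, hxy⟩ := hs n x (mem_ball.2 (by push_cast; linarith))
  exact ⟨y, Set.mem_iUnion.2 ⟨n, hy⟩, hxy⟩

lemma locFinite (hdbl : Doubling μ Cd) : IsLocallyFiniteMeasure μ :=
  ⟨fun x => ⟨ball x 1, ball_mem_nhds x one_pos, (hdbl x 1 one_pos).2.2⟩⟩

lemma unifDbl (hCd : 1 ≤ Cd) (hdbl : Doubling μ Cd) :
    IsUnifLocDoublingMeasure μ := by
  refine ⟨⟨(Cd*Cd).toNNReal, ?_⟩⟩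
  filter_upwards [self_mem_nhdsWithin] with ε (hε : ε ∈ Set.Ioi 0)
  intro x
  have hε' : (0:ℝ) < ε := hε
  have hco : ((Cd*Cd).toNNReal : ℝ≥0∞) = ENNReal.ofReal Cd * ENNReal.ofReal Cd := by
    rw [← ENNReal.ofReal_mul (by linarith)]; rfl
  rw [hco, mul_assoc]
  calc μ (closedBall x (2*ε)) ≤ μ (ball x (2*(2*ε))) :=
        measure_mono (closedBall_subset_ball (by linarith))
    _ ≤ ENNReal.ofReal Cd * μ (ball x (2*ε)) := (hdbl x _ (by linarith)).2.1
    _ ≤ ENNReal.ofReal Cd * (ENNReal.ofReal Cd * μ (ball x ε)) :=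
        mul_le_mul_right ((hdbl x ε hε').2.1) _
    _ ≤ ENNReal.ofReal Cd * (ENNReal.ofReal Cd * μ (closedBall x ε)) := by
        exact mul_le_mul_right (mul_le_mul_right (measure_mono ball_subset_closedBall) _) _

lemma ennreal_sub_div {a b : ℝ≥0∞} (hb0 : b ≠ 0) (hbt : b ≠ ∞) (hab : a ≤ b) :
    (b - a)/b = 1 - a/b := by
  have hab' : a/b ≠ ∞ := (ENNReal.div_lt_top (hab.trans_lt hbt.lt_top).ne hb0).ne
  have h1 : (b-a)/b + a/b = 1 := by
    rw [ENNReal.div_add_div_same, tsub_add_cancel_of_le hab, ENNReal.div_self hb0 hbt]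
  exact ENNReal.eq_sub_of_add_eq hab' h1

lemma div_le_mul_div {a a' b b' C : ℝ≥0∞} (haa : a' ≤ a) (hbb : b ≤ C * b')
    (hC0 : C ≠ 0) (hCt : C ≠ ∞) : a'/b' ≤ C * (a/b) := by
  calc a'/b' = (C * C⁻¹) * (a' * b'⁻¹) := by
        rw [ENNReal.mul_inv_cancel hC0 hCt, one_mul, div_eq_mul_inv]
    _ = C * (a' * (C⁻¹ * b'⁻¹)) := by ring
    _ = C * (a' * (C * b')⁻¹) := by
        rw [ENNReal.mul_inv (Or.inl hC0) (Or.inl hCt)]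
    _ ≤ C * (a * b⁻¹) := by
        refine mul_le_mul_right (mul_le_mul' haa ?_) _
        exact ENNReal.inv_le_inv.2 hbb
    _ = C * (a/b) := by rw [div_eq_mul_inv]

lemma null_diff_mInt [BorelSpace X] (hCd : 1 ≤ Cd) (hdbl : Doubling μ Cd)
    {E : Set X} (hE : MeasurableSet E) : μ (E \ mInt μ E) = 0 := by
  haveI := sc_of_doubling hCd hdbl
  haveI := locFinite hdbl
  haveI := unifDbl hCd hdbl
  have hae := IsUnifLocDoublingMeasure.ae_tendsto_measure_inter_div μ E 1
  have hae2 : ∀ᵐ x ∂μ.restrict E,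
      Tendsto (fun r => μ (E ∩ closedBall x r) / μ (closedBall x r)) (𝓝[>] 0) (𝓝 1) := by
    filter_upwards [hae] with x hx
    refine hx (fun _ => x) id tendsto_id ?_
    filter_upwards [self_mem_nhdsWithin] with r (hr : r ∈ Set.Ioi 0)
    exact mem_closedBall_self (by rw [one_mul]; exact le_of_lt hr)
  have claim : ∀ x : X,
      Tendsto (fun r => μ (E ∩ closedBall x r) / μ (closedBall x r)) (𝓝[>] 0) (𝓝 1) →
      x ∈ mInt μ E := by
    intro x hP
    have hG : Tendsto (fun r => μ (closedBall x r \ E) / μ (closedBall x r)) (𝓝[>] 0) (𝓝 0) := by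
      have h1 : Tendsto (fun r => 1 - μ (E ∩ closedBall x r) / μ (closedBall x r))
          (𝓝[>] 0) (𝓝 (1-1)) :=
        ENNReal.Tendsto.sub tendsto_const_nhds hP (Or.inl ENNReal.one_ne_top)
      rw [tsub_self] at h1
      refine h1.congr' ?_
      filter_upwards [self_mem_nhdsWithin] with r (hr : r ∈ Set.Ioi 0)
      have hr' : (0:ℝ) < r := hr
      have hb0 : μ (closedBall x r) ≠ 0 :=
        (lt_of_lt_of_le (hdbl x r hr').1 (measure_mono ball_subset_closedBall)).ne'
      have hbt : μ (closedBall x r) ≠ ∞ :=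
        (lt_of_le_of_lt (measure_mono (closedBall_subset_ball (by linarith)))
          (hdbl x (2*r) (by linarith)).2.2).ne
      have hab : μ (E ∩ closedBall x r) ≤ μ (closedBall x r) :=
        measure_mono Set.inter_subset_right
      have hdiff : μ (closedBall x r \ E)
          = μ (closedBall x r) - μ (E ∩ closedBall x r) := by
        rw [← Set.diff_inter_self_eq_diff]
        exact measure_diff Set.inter_subset_right
          ((hE.inter measurableSet_closedBall).nullMeasurableSet)
          (hab.trans_lt hbt.lt_top).ne
      rw [hdiff, ennreal_sub_div hb0 hbt hab]
    have hev : ∀ᶠ r in 𝓝[>] (0:ℝ), μ (ball x r \ E) / μ (ball x r)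
        ≤ ENNReal.ofReal Cd * (μ (closedBall x r \ E) / μ (closedBall x r)) := by
      filter_upwards [self_mem_nhdsWithin] with r (hr : r ∈ Set.Ioi 0)
      have hr' : (0:ℝ) < r := hr
      refine div_le_mul_div (measure_mono (Set.diff_subset_diff_left ball_subset_closedBall))
        ?_ (cdE_pos hCd) ENNReal.ofReal_ne_top
      calc μ (closedBall x r) ≤ μ (ball x (2*r)) :=
            measure_mono (closedBall_subset_ball (by linarith))
        _ ≤ ENNReal.ofReal Cd * μ (ball x r) := (hdbl x r hr').2.1
    have htop : Tendsto (fun r => ENNReal.ofReal Cd *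
        (μ (closedBall x r \ E) / μ (closedBall x r))) (𝓝[>] (0:ℝ)) (𝓝 0) := by
      have := ENNReal.Tendsto.const_mul (a := ENNReal.ofReal Cd) hG (Or.inr ENNReal.ofReal_ne_top)
      rwa [mul_zero] at this
    exact tendsto_of_tendsto_of_tendsto_of_le_of_le' tendsto_const_nhds htop
      (Filter.Eventually.of_forall (fun r => zero_le)) hev
  have hmem : ∀ᵐ x ∂μ.restrict E, x ∈ mInt μ E := by
    filter_upwards [hae2] with x hx using claim x hx
  rw [ae_iff] at hmem
  rw [Measure.restrict_apply' hE] at hmem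
  exact measure_mono_null (fun y hy => Set.mem_inter hy.2 hy.1) hmem

lemma mExt_subset_compl_mInt (hdbl : Doubling μ Cd) {E : Set X} (hE : MeasurableSet E) :
    mExt μ E ⊆ (mInt μ E)ᶜ := by
  intro x hx hx'
  have hx'' : Tendsto (fun r => μ (ball x r \ E) / μ (ball x r)) (𝓝[>] (0:ℝ)) (𝓝 0) := hx'
  have hx2 : Tendsto (fun r => μ (ball x r ∩ E) / μ (ball x r)) (𝓝[>] (0:ℝ)) (𝓝 0) := hx
  have hsum : Tendsto (fun r => μ (ball x r \ E) / μ (ball x r)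
      + μ (ball x r ∩ E) / μ (ball x r)) (𝓝[>] (0:ℝ)) (𝓝 0) := by
    have := hx''.add hx2
    rwa [add_zero] at this
  have hev : ∀ᶠ r in 𝓝[>] (0:ℝ), (fun r => μ (ball x r \ E) / μ (ball x r)
      + μ (ball x r ∩ E) / μ (ball x r)) r = (1:ℝ≥0∞) := by
    filter_upwards [self_mem_nhdsWithin] with r (hr : r ∈ Set.Ioi 0)
    have hr' : (0:ℝ) < r := hr
    have h1 : μ (ball x r \ E) + μ (ball x r ∩ E) = μ (ball x r) := by
      rw [add_comm]; exact measure_inter_add_diff _ hE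
    simp only [ENNReal.div_add_div_same, h1]
    exact ENNReal.div_self (hdbl x r hr').1.ne' (hdbl x r hr').2.2.ne
  have hone : Tendsto (fun _ : ℝ => (1:ℝ≥0∞)) (𝓝[>] (0:ℝ)) (𝓝 0) :=
    hsum.congr' hev
  have := tendsto_nhds_unique hone tendsto_const_nhds
  exact one_ne_zero this.symm

lemma locInt_of_bounded (hdbl : Doubling μ Cd) {f : X → ℝ} (hm : Measurable f)
    (hb : ∀ y, |f y| ≤ 1) : MeasureTheory.LocallyIntegrable f μ := by
  intro x
  refine ⟨ball x 1, ball_mem_nhds x one_pos, ?_⟩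
  exact Measure.integrableOn_of_bounded (hdbl x 1 one_pos).2.2.ne hm.aestronglyMeasurable
    (Filter.Eventually.of_forall (fun y => by simpa [Real.norm_eq_abs] using hb y))

lemma preconnected_of_PI [BorelSpace X] {CP lam : ℝ} (hCd : 1 ≤ Cd) (hCP : 0 < CP)
    (hlam : 1 ≤ lam) (hdbl : Doubling μ Cd) (hpoin : PoincareInequality μ CP lam) :
    PreconnectedSpace X := by
  by_contra hcon
  have hnp : ¬ IsPreconnected (Set.univ : Set X) := fun h => hcon ⟨h⟩
  rw [IsPreconnected] at hnp
  push_neg at hnp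
  obtain ⟨u, v, hu, hv, hcov, ⟨p, -, hp⟩, ⟨q, -, hq⟩, hdisj⟩ := hnp
  rw [Set.univ_inter] at hdisj
  have hdisj' : Disjoint u v := Set.disjoint_iff_inter_eq_empty.2 hdisj
  set f : X → ℝ := u.indicator (fun _ => (1:ℝ)) with hf
  have hfm : Measurable f := measurable_const.indicator hu.measurableSet
  have hfug : IsUpperGradient f (fun _ => 0) := by
    refine ⟨measurable_const, fun γ => ?_⟩
    have himg : IsPreconnected (γ.toFun '' Set.Icc 0 γ.len) :=
      isPreconnected_Icc.image _ γ.lipschitz.continuousOn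
    have hsub : γ.toFun '' Set.Icc 0 γ.len ⊆ u ∨ γ.toFun '' Set.Icc 0 γ.len ⊆ v :=
      himg.subset_or_subset hu hv hdisj' (fun y _ => hcov (Set.mem_univ y))
    have h0 : γ.toFun 0 ∈ γ.toFun '' Set.Icc 0 γ.len :=
      Set.mem_image_of_mem _ ⟨le_refl 0, γ.len_nonneg⟩
    have hl : γ.toFun γ.len ∈ γ.toFun '' Set.Icc 0 γ.len :=
      Set.mem_image_of_mem _ ⟨γ.len_nonneg, le_refl _⟩
    have heq : f (γ.toFun 0) = f (γ.toFun γ.len) := by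
      rcases hsub with h | h
      · rw [hf, Set.indicator_of_mem (h h0), Set.indicator_of_mem (h hl)]
      · have h0' : γ.toFun 0 ∉ u := fun hc => (Set.disjoint_left.1 hdisj') hc (h h0)
        have hl' : γ.toFun γ.len ∉ u := fun hc => (Set.disjoint_left.1 hdisj') hc (h hl)
        rw [hf, Set.indicator_of_notMem h0', Set.indicator_of_notMem hl']
    rw [ugIneq, heq, sub_self, abs_zero, ENNReal.ofReal_zero]
    exact zero_le
  have hfb : ∀ y, |f y| ≤ 1 := by
    intro y
    rw [hf]
    by_cases hy : y ∈ u <;> simp [Set.indicator_apply, hy]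
  set R : ℝ := dist p q + 1 with hR
  have hR0 : 0 < R := by have := dist_nonneg (x := p) (y := q); linarith
  have hpoin' := hpoin p R hR0 f (fun _ => 0) (locInt_of_bounded hdbl hfm hfb) hfug
  set c : ℝ := ⨍ z in ball p R, f z ∂μ with hc
  have hz : (∫⁻ y in ball p R, ENNReal.ofReal |f y - c| ∂μ) = 0 := by
    have h0 : (∫⁻ y in ball p (lam * R), (fun _ => (0:ℝ≥0∞)) y ∂μ) = 0 := lintegral_zero
    rw [h0, ENNReal.zero_div, mul_zero] at hpoin'
    have := le_antisymm hpoin' (zero_le)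
    rcases (ENNReal.div_eq_zero_iff).1 this with h | h
    · exact h
    · exact absurd h (hdbl p R hR0).2.2.ne
  have haez : ∀ᵐ y ∂μ.restrict (ball p R), f y = c := by
    have hmz : Measurable (fun y => ENNReal.ofReal |f y - c|) :=
      (hfm.sub measurable_const).abs.ennreal_ofReal
    have := (lintegral_eq_zero_iff hmz).1 hz
    filter_upwards [this] with y hy
    have : |f y - c| ≤ 0 := ENNReal.ofReal_eq_zero.1 hy
    have := le_antisymm this (abs_nonneg _)
    have := abs_eq_zero.1 this
    linarith [this]
  have hnull : μ ({y | f y ≠ c} ∩ ball p R) = 0 := by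
    rw [← Measure.restrict_apply' measurableSet_ball]
    exact (ae_iff).1 haez
  have hval : ∀ w : X, ∀ ε : ℝ, 0 < ε → ball w ε ⊆ {y | f y ≠ c} ∩ ball p R → False := by
    intro w ε hε hsub
    have := measure_mono_null hsub hnull
    exact absurd this (hdbl w ε hε).1.ne'
  have hc1 : c = 1 := by
    by_contra hne
    obtain ⟨ε1, hε1, hball⟩ := Metric.isOpen_iff.1 hu p hp
    refine hval p (min ε1 R) (lt_min hε1 hR0) ?_
    intro y hy
    have hyu : y ∈ u := hball (mem_ball.1 hy |>.trans_le (min_le_left _ _) |> mem_ball.2)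
    have hyR : y ∈ ball p R := mem_ball.2 ((mem_ball.1 hy).trans_le (min_le_right _ _))
    refine ⟨?_, hyR⟩
    simp only [Set.mem_setOf_eq, hf, Set.indicator_of_mem hyu]
    exact fun hcc => hne hcc.symm
  have hc0 : c = 0 := by
    by_contra hne
    obtain ⟨ε2, hε2, hball⟩ := Metric.isOpen_iff.1 hv q hq
    refine hval q (min ε2 1) (lt_min hε2 one_pos) ?_
    intro y hy
    have hyv : y ∈ v := hball (mem_ball.1 hy |>.trans_le (min_le_left _ _) |> mem_ball.2)
    have hyu : y ∉ u := fun hc => (Set.disjoint_left.1 hdisj') hc hyv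
    have hyR : y ∈ ball p R := by
      rw [mem_ball] at hy ⊢
      calc dist y p ≤ dist y q + dist q p := dist_triangle _ _ _
        _ < 1 + dist q p := by linarith [hy.trans_le (min_le_right ε2 1)]
        _ = R := by rw [hR, dist_comm]; ring
    refine ⟨?_, hyR⟩
    simp only [Set.mem_setOf_eq, hf, Set.indicator_of_notMem hyu]
    exact fun hcc => hne hcc.symm
  rw [hc0] at hc1
  exact one_ne_zero hc1.symm

lemma exists_ug_of_wug [BorelSpace X] {u : X → ℝ} {g : X → ℝ≥0∞}
    (hg : IsWUG μ u g Set.univ) {δ : ℝ≥0∞} (hδ : 0 < δ) :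
    ∃ h : X → ℝ≥0∞, IsUpperGradient u h ∧ ∫⁻ x, h x ∂μ ≤ (∫⁻ x, g x ∂μ) + δ := by
  obtain ⟨hgm, hmod⟩ := hg
  set Γ : Set (Curve X) := {γ : Curve X | γ.In Set.univ ∧ ¬ ugIneq u g γ} with hΓ
  have hsel : ∀ k : ℕ, ∃ ρ : X → ℝ≥0∞, (Measurable ρ ∧
      ∀ γ ∈ Γ, 1 ≤ curveIntegral ρ γ) ∧ ∫⁻ x, ρ x ∂μ ≤ δ * 2⁻¹^(k+1) := by
    intro k
    have hlt : Mod1 μ Γ < δ * 2⁻¹^(k+1) := by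
      rw [hmod]
      exact ENNReal.mul_pos hδ.ne' (pow_ne_zero _ (ENNReal.inv_ne_zero.2 ENNReal.ofNat_ne_top))
    simp only [Mod1, iInf_lt_iff] at hlt
    obtain ⟨ρ, hρ, hint⟩ := hlt
    exact ⟨ρ, hρ, hint.le⟩
  choose ρk hρk hρint using hsel
  set ρ : X → ℝ≥0∞ := fun x => ∑' k, ρk k x with hρ
  have hρm : Measurable ρ := Measurable.ennreal_tsum (fun k => (hρk k).1)
  have hρint' : ∫⁻ x, ρ x ∂μ ≤ δ := by
    rw [hρ]
    rw [lintegral_tsum (fun k => ((hρk k).1).aemeasurable)]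
    calc ∑' k, ∫⁻ x, ρk k x ∂μ ≤ ∑' k : ℕ, δ * 2⁻¹^(k+1) :=
          ENNReal.tsum_le_tsum (fun k => hρint k)
      _ = δ * ∑' k : ℕ, (2⁻¹:ℝ≥0∞)^(k+1) := by rw [ENNReal.tsum_mul_left]
      _ = δ := by
          rw [ENNReal.tsum_geometric_add_one, ENNReal.one_sub_inv_two, inv_inv]
          rw [mul_comm (2⁻¹:ℝ≥0∞) 2, ENNReal.mul_inv_cancel two_ne_zero ENNReal.ofNat_ne_top,
            mul_one]
  refine ⟨fun x => g x + ρ x, ⟨hgm.add hρm, fun γ => ?_⟩, ?_⟩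
  · by_cases hγ : ugIneq u g γ
    · refine le_trans hγ (lintegral_mono (fun t => ?_))
      exact self_le_add_right _ _
    · have hγΓ : γ ∈ Γ := ⟨fun t _ => Set.mem_univ _, hγ⟩
      have hcm : AEMeasurable γ.toFun
          (MeasureTheory.volume.restrict (Set.Icc (0:ℝ) γ.len)) :=
        γ.lipschitz.continuousOn.aemeasurable measurableSet_Icc
      have htop : curveIntegral ρ γ = ∞ := by
        have heq : curveIntegral ρ γ = ∑' k, curveIntegral (ρk k) γ := by
          rw [curveIntegral]
          exact lintegral_tsum (fun k => ((hρk k).1).comp_aemeasurable hcm)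
        rw [heq]
        refine top_le_iff.1 ?_
        calc (⊤:ℝ≥0∞) = ∑' _ : ℕ, (1:ℝ≥0∞) :=
              (ENNReal.tsum_const_eq_top_of_ne_zero one_ne_zero).symm
          _ ≤ ∑' k, curveIntegral (ρk k) γ :=
              ENNReal.tsum_le_tsum (fun k => (hρk k).2 γ hγΓ)
      have : curveIntegral (fun x => g x + ρ x) γ = ∞ := by
        refine top_le_iff.1 ?_
        rw [← htop]
        exact lintegral_mono (fun t => self_le_add_left _ _)
      rw [ugIneq, this]
      exact le_top
  · rw [lintegral_add_left hgm]
    exact add_le_add_right hρint' _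

lemma clamp_lip (a b : ℝ) : |min (max a 0) 1 - min (max b 0) 1| ≤ |a - b| := by
  have h1 := abs_min_sub_min_le_max (max a 0) 1 (max b 0) 1
  have h2 := abs_max_sub_max_le_abs a b 0
  calc |min (max a 0) 1 - min (max b 0) 1| ≤ max |max a 0 - max b 0| |(1:ℝ) - 1| := h1
    _ = |max a 0 - max b 0| := by
        rw [sub_self, abs_zero]
        exact max_eq_left (abs_nonneg _)
    _ ≤ |a - b| := h2

lemma le_mul_iInf {c : ℝ≥0∞} (hc0 : c ≠ 0) (hct : c ≠ ∞) {ι : Sort*} {f : ι → ℝ≥0∞}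
    {a : ℝ≥0∞} (h : ∀ i, a ≤ c * f i) : a ≤ c * ⨅ i, f i := by
  rw [ENNReal.mul_iInf_of_ne hc0 hct]
  exact le_iInf h

lemma le_mul_iInf₂ {c : ℝ≥0∞} (hc0 : c ≠ 0) (hct : c ≠ ∞) {ι : Sort*} {P : ι → Prop}
    {f : ι → ℝ≥0∞} {a : ℝ≥0∞} (h : ∀ i, P i → a ≤ c * f i) :
    a ≤ c * ⨅ i, ⨅ (_ : P i), f i := by
  refine le_mul_iInf hc0 hct (fun i => ?_)
  by_cases hP : P i
  · rw [iInf_pos hP]; exact h i hP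
  · rw [iInf_neg hP, ENNReal.mul_top hc0]; exact le_top

lemma lint_const_le_of_eq {S T : Set X} (hST : S ⊆ T) {v : X → ℝ} (hv : Measurable v)
    {t0 c : ℝ} (hvt : ∀ z ∈ S, v z = t0) :
    ENNReal.ofReal |t0 - c| * μ S ≤ ∫⁻ z in T, ENNReal.ofReal |v z - c| ∂μ := by
  have hmeas : MeasurableSet {z | ¬ v z = t0} := (hv (measurableSet_singleton t0)).compl
  have hae : ∀ᵐ z ∂μ.restrict S, v z = t0 := by
    rw [ae_iff, Measure.restrict_apply hmeas]
    have : {z | ¬ v z = t0} ∩ S = ∅ :=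
      Set.eq_empty_iff_forall_notMem.2 (fun z hz => hz.1 (hvt z hz.2))
    rw [this, measure_empty]
  calc ENNReal.ofReal |t0 - c| * μ S
      = ∫⁻ _ in S, ENNReal.ofReal |t0 - c| ∂μ := (setLIntegral_const _ _).symm
    _ = ∫⁻ z in S, ENNReal.ofReal |v z - c| ∂μ :=
        lintegral_congr_ae (hae.mono (fun z hz => by
          show ENNReal.ofReal |t0 - c| = ENNReal.ofReal |v z - c|
          rw [hz]))
    _ ≤ ∫⁻ z in T, ENNReal.ofReal |v z - c| ∂μ := lintegral_mono_set hST

lemma half_le_ofReal {t : ℝ} (ht : 1/2 ≤ |t|) : (2⁻¹:ℝ≥0∞) ≤ ENNReal.ofReal |t| := by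
  have h1 : (2⁻¹:ℝ≥0∞) = ENNReal.ofReal (1/2) := by
    rw [one_div, ENNReal.ofReal_inv_of_pos two_pos, ENNReal.ofReal_ofNat]
  rw [h1]
  exact ENNReal.ofReal_le_ofReal ht

lemma double_of_half_le {a b : ℝ≥0∞} (h : 2⁻¹ * a ≤ b) : a ≤ 2 * b := by
  calc a = (2 * 2⁻¹) * a := by
        rw [ENNReal.mul_inv_cancel two_ne_zero ENNReal.ofNat_ne_top, one_mul]
    _ = 2 * (2⁻¹ * a) := by ring
    _ ≤ 2 * b := mul_le_mul_right h _

lemma core_bound [BorelSpace X] {CP lam : ℝ} (hCd : 1 ≤ Cd) (hCP : 0 < CP) (hlam : 1 ≤ lam)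
    (hdbl : Doubling μ Cd) (hpoin : PoincareInequality μ CP lam)
    (x y : X) (A : Set X) {r : ℝ} (hr : 0 < r) (hy : dist x y = 3*r)
    {u0 : X → ℝ} (hmem : MemN11Zero μ u0 (ball x (2*r)) Set.univ)
    (h1 : ∀ z ∈ A ∩ ball x r, 1 ≤ u0 z)
    {h : X → ℝ≥0∞} (hug : IsUpperGradient u0 h) :
    μ (A ∩ ball x r) ≤ ((ENNReal.ofReal Cd)^4 * 2 * ENNReal.ofReal (4*CP)) *
      (ENNReal.ofReal r * ∫⁻ z, h z ∂μ) := by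
  set CdE := ENNReal.ofReal Cd with hCdE
  set v : X → ℝ := fun z => min (max (u0 z) 0) 1 with hv
  have hu0m : Measurable u0 := hmem.1.1
  have hvm : Measurable v := (hu0m.max measurable_const).min measurable_const
  have hvb : ∀ z, |v z| ≤ 1 := by
    intro z
    rw [abs_le]
    constructor
    · have : (0:ℝ) ≤ min (max (u0 z) 0) 1 := le_min (le_max_right _ _) zero_le_one
      linarith
    · exact min_le_right _ _
  have hvug : IsUpperGradient v h := by
    refine ⟨hug.1, fun γ => ?_⟩
    exact le_trans (ENNReal.ofReal_le_ofReal (clamp_lip _ _)) (hug.2 γ)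
  have hr4 : (0:ℝ) < 4*r := by linarith
  have hpoin' := hpoin x (4*r) hr4 v h (locInt_of_bounded hdbl hvm hvb) hvug
  set c : ℝ := ⨍ z in ball x (4*r), v z ∂μ with hc
  set I : ℝ≥0∞ := ∫⁻ z in ball x (4*r), ENNReal.ofReal |v z - c| ∂μ with hI
  have hb40 : μ (ball x (4*r)) ≠ 0 := (hdbl x (4*r) hr4).1.ne'
  have hb4t : μ (ball x (4*r)) ≠ ∞ := (hdbl x (4*r) hr4).2.2.ne
  have hIbound : I ≤ ENNReal.ofReal (CP*(4*r)) * ∫⁻ z, h z ∂μ := by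
    have hIb := (ENNReal.div_le_iff_le_mul (Or.inl hb40) (Or.inl hb4t)).1 hpoin'
    set J := ∫⁻ z in ball x (lam*(4*r)), h z ∂μ with hJ
    calc I ≤ (ENNReal.ofReal (CP*(4*r)) * (J / μ (ball x (lam*(4*r))))) * μ (ball x (4*r)) := hIb
      _ ≤ (ENNReal.ofReal (CP*(4*r)) * (J / μ (ball x (lam*(4*r))))) * μ (ball x (lam*(4*r))) := by
          refine mul_le_mul_right (measure_mono (ball_subset_ball ?_)) _
          nlinarith
      _ = ENNReal.ofReal (CP*(4*r)) * ((J / μ (ball x (lam*(4*r)))) * μ (ball x (lam*(4*r)))) :=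
          mul_assoc _ _ _
      _ ≤ ENNReal.ofReal (CP*(4*r)) * J := by
          refine mul_le_mul_right ?_ _
          rw [mul_comm]
          exact ENNReal.mul_div_le
      _ ≤ ENNReal.ofReal (CP*(4*r)) * ∫⁻ z, h z ∂μ :=
          mul_le_mul_right (setLIntegral_le_lintegral _ _) _
  have hsub1 : A ∩ ball x r ⊆ ball x (4*r) :=
    (Set.inter_subset_right).trans (ball_subset_ball (by linarith))
  have hsubY : ball y (r/2) ⊆ ball x (4*r) := by
    intro w hw
    rw [mem_ball] at hw ⊢
    calc dist w x ≤ dist w y + dist y x := dist_triangle _ _ _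
      _ < r/2 + 3*r := by rw [dist_comm y x, hy]; linarith
      _ ≤ 4*r := by linarith
  have hvS : ∀ z ∈ A ∩ ball x r, v z = 1 := by
    intro z hz
    exact min_eq_right ((h1 z hz).trans (le_max_left _ _))
  have hvY : ∀ z ∈ ball y (r/2), v z = 0 := by
    intro z hz
    have hzout : z ∉ ball x (2*r) := by
      rw [mem_ball]
      intro hcon
      have ht := dist_triangle x z y
      have h1' : dist z y < r/2 := mem_ball.1 hz
      have h2' : dist z x = dist x z := dist_comm z x
      rw [hy] at ht
      linarith
    have hz0 : u0 z = 0 := hmem.2 z ⟨Set.mem_univ z, hzout⟩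
    simp [hv, hz0]
  have hlow1 : ENNReal.ofReal |1 - c| * μ (A ∩ ball x r) ≤ I :=
    lint_const_le_of_eq hsub1 hvm hvS
  have hlow2 : ENNReal.ofReal |0 - c| * μ (ball y (r/2)) ≤ I :=
    lint_const_le_of_eq hsubY hvm hvY
  have hone : (1:ℝ≥0∞) ≤ CdE^4 := by
    calc (1:ℝ≥0∞) = 1^4 := by norm_num
      _ ≤ CdE^4 := pow_le_pow_left₀ (zero_le) (cdE_one_le hCd) 4
  have hcases : μ (A ∩ ball x r) ≤ CdE^4 * (2 * I) := by
    rcases le_or_gt (1/2) |1 - c| with hca | hca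
    · have h5 : 2⁻¹ * μ (A ∩ ball x r) ≤ I :=
        le_trans (mul_le_mul_left (half_le_ofReal hca) _) hlow1
      calc μ (A ∩ ball x r) ≤ 2 * I := double_of_half_le h5
        _ ≤ CdE^4 * (2 * I) := le_mul_of_one_le_left (zero_le) hone
    · have hcb : 1/2 ≤ |0 - c| := by
        have := abs_add_le (1 - c) c
        simp only [sub_add_cancel, abs_one] at this
        rw [zero_sub, abs_neg]
        linarith
      have h5 : 2⁻¹ * μ (ball y (r/2)) ≤ I :=
        le_trans (mul_le_mul_left (half_le_ofReal hcb) _) hlow2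
      have h6 : μ (A ∩ ball x r) ≤ CdE^4 * μ (ball y (r/2)) := by
        have hsub8 : A ∩ ball x r ⊆ ball y (8*r) := by
          intro w hw
          have hw4 : w ∈ ball x (4*r) := hsub1 hw
          rw [mem_ball] at hw4 ⊢
          calc dist w y ≤ dist w x + dist x y := dist_triangle _ _ _
            _ < 4*r + 3*r := by rw [hy]; linarith
            _ ≤ 8*r := by linarith
        exact le_trans (measure_mono hsub8)
          (dbl_of_le hdbl y (by linarith : (0:ℝ) < r/2) 4 (le_of_eq (by ring)))
      calc μ (A ∩ ball x r) ≤ CdE^4 * μ (ball y (r/2)) := h6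
        _ ≤ CdE^4 * (2 * I) := mul_le_mul_right (double_of_half_le h5) _
  have hsplit : ENNReal.ofReal (4*CP) * ENNReal.ofReal r = ENNReal.ofReal (CP*(4*r)) := by
    rw [← ENNReal.ofReal_mul (by linarith : (0:ℝ) ≤ 4*CP)]
    congr 1
    ring
  calc μ (A ∩ ball x r) ≤ CdE^4 * (2 * I) := hcases
    _ ≤ CdE^4 * (2 * (ENNReal.ofReal (CP*(4*r)) * ∫⁻ z, h z ∂μ)) := by
        exact mul_le_mul_right (mul_le_mul_right hIbound _) _
    _ = (CdE^4 * 2 * ENNReal.ofReal (4*CP)) * (ENNReal.ofReal r * ∫⁻ z, h z ∂μ) := by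
        rw [← hsplit]
        ring

lemma cap_density_bound [BorelSpace X] {CP lam : ℝ} (hCd : 1 ≤ Cd) (hCP : 0 < CP)
    (hlam : 1 ≤ lam) (hdbl : Doubling μ Cd) (hpoin : PoincareInequality μ CP lam)
    (x y : X) (A : Set X) {r : ℝ} (hr : 0 < r) (hy : dist x y = 3*r) :
    μ (A ∩ ball x r) ≤ ((ENNReal.ofReal Cd)^4 * 2 * ENNReal.ofReal (4*CP)) *
      (ENNReal.ofReal r * rcapa1 μ (A ∩ ball x r) (ball x (2*r))) := by
  set K : ℝ≥0∞ := (ENNReal.ofReal Cd)^4 * 2 * ENNReal.ofReal (4*CP) with hK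
  have hK0 : K ≠ 0 := by
    refine mul_ne_zero (mul_ne_zero (pow_ne_zero _ (cdE_pos hCd)) two_ne_zero) ?_
    simp only [ne_eq, ENNReal.ofReal_eq_zero, not_le]
    linarith
  have hKt : K ≠ ∞ :=
    ENNReal.mul_ne_top (ENNReal.mul_ne_top (ENNReal.pow_ne_top ENNReal.ofReal_ne_top)
      ENNReal.ofNat_ne_top) ENNReal.ofReal_ne_top
  have hr0 : ENNReal.ofReal r ≠ 0 := by
    simp only [ne_eq, ENNReal.ofReal_eq_zero, not_le]; linarith
  have hc0 : K * ENNReal.ofReal r ≠ 0 := mul_ne_zero hK0 hr0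
  have hct : K * ENNReal.ofReal r ≠ ∞ := ENNReal.mul_ne_top hKt ENNReal.ofReal_ne_top
  rw [← mul_assoc]
  rw [rcapa1]
  refine le_mul_iInf₂ hc0 hct (fun u0 hu0 => ?_)
  rw [eD1]
  refine le_mul_iInf₂ hc0 hct (fun g hg => ?_)
  refine ENNReal.le_of_forall_pos_le_add (fun ε hε hfin => ?_)
  set δ : ℝ≥0∞ := (ε:ℝ≥0∞) / (K * ENNReal.ofReal r) with hδ
  have hδpos : 0 < δ := ENNReal.div_pos (by exact_mod_cast hε.ne') hct
  obtain ⟨h, hug, hint⟩ := exists_ug_of_wug hg hδpos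
  have hcore := core_bound hCd hCP hlam hdbl hpoin x y A hr hy hu0.1 hu0.2 hug
  rw [Measure.restrict_univ]
  calc μ (A ∩ ball x r) ≤ K * (ENNReal.ofReal r * ∫⁻ z, h z ∂μ) := hcore
    _ ≤ K * (ENNReal.ofReal r * ((∫⁻ z, g z ∂μ) + δ)) := by
        exact mul_le_mul_right (mul_le_mul_right hint _) _
    _ = (K * ENNReal.ofReal r) * (∫⁻ z, g z ∂μ) + (K * ENNReal.ofReal r) * δ := by
        rw [mul_add]; ring
    _ ≤ (K * ENNReal.ofReal r) * (∫⁻ z, g z ∂μ) + ε := by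
        refine add_le_add_right ?_ _
        exact ENNReal.mul_div_le

lemma fine_open_density [BorelSpace X] {CP lam : ℝ} (hCd : 1 ≤ Cd) (hCP : 0 < CP)
    (hlam : 1 ≤ lam) (hdbl : Doubling μ Cd) (hpoin : PoincareInequality μ CP lam)
    {U : Set X} (hU : FinelyOpen μ U) {x : X} (hx : x ∈ U) :
    Tendsto (fun r : ℝ => μ (ball x r \ U) / μ (ball x r)) (𝓝[>] 0) (𝓝 0) := by
  by_cases hsing : ∀ z : X, z = x
  · have hempty : ∀ r : ℝ, ball x r \ U = ∅ := by
      intro r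
      refine Set.eq_empty_iff_forall_notMem.2 (fun w hw => ?_)
      have := hsing w
      rw [this] at hw
      exact hw.2 hx
    have : (fun r : ℝ => μ (ball x r \ U) / μ (ball x r)) = (fun _ => 0) := by
      funext r
      rw [hempty r, measure_empty, ENNReal.zero_div]
    rw [this]
    exact tendsto_const_nhds
  push_neg at hsing
  obtain ⟨z, hz⟩ := hsing
  haveI := preconnected_of_PI hCd hCP hlam hdbl hpoin
  have hthin : Tendsto (fun r : ℝ => ENNReal.ofReal r *
      rcapa1 μ (Uᶜ ∩ ball x r) (ball x (2*r)) / μ (ball x r)) (𝓝[>] 0) (𝓝 0) := hU x hx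
  set K : ℝ≥0∞ := (ENNReal.ofReal Cd)^4 * 2 * ENNReal.ofReal (4*CP) with hK
  have hKt : K ≠ ∞ :=
    ENNReal.mul_ne_top (ENNReal.mul_ne_top (ENNReal.pow_ne_top ENNReal.ofReal_ne_top)
      ENNReal.ofNat_ne_top) ENNReal.ofReal_ne_top
  have hup : Tendsto (fun r : ℝ => K * (ENNReal.ofReal r *
      rcapa1 μ (Uᶜ ∩ ball x r) (ball x (2*r)) / μ (ball x r))) (𝓝[>] 0) (𝓝 0) := by
    have := ENNReal.Tendsto.const_mul (a := K) hthin (Or.inr hKt)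
    rwa [mul_zero] at this
  refine tendsto_of_tendsto_of_tendsto_of_le_of_le' tendsto_const_nhds hup
    (Filter.Eventually.of_forall (fun r => zero_le)) ?_
  have hdz : 0 < dist x z := dist_pos.2 (fun h => hz h.symm)
  filter_upwards [Ioo_mem_nhdsGT_of_mem
    (Set.left_mem_Ico.2 (by positivity : (0:ℝ) < dist x z / 3))] with r hr
  have hr0 : 0 < r := hr.1
  have hr3 : 3 * r < dist x z := by
    have := hr.2
    linarith [hr.2, (by linarith : r < dist x z / 3)]
  obtain ⟨y, hy⟩ : ∃ y : X, dist x y = 3*r := by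
    have hcont : Continuous (fun p : X => dist x p) := continuous_const.dist continuous_id
    have hmem : (3*r) ∈ Set.Icc (dist x x) (dist x z) := by
      rw [dist_self]
      exact ⟨by linarith, by linarith⟩
    exact intermediate_value_univ x z hcont hmem
  have hb := cap_density_bound hCd hCP hlam hdbl hpoin x y Uᶜ hr0 hy
  have hsets : ball x r \ U = Uᶜ ∩ ball x r := by rw [Set.diff_eq, Set.inter_comm]
  calc μ (ball x r \ U) / μ (ball x r)
      = μ (Uᶜ ∩ ball x r) / μ (ball x r) := by rw [hsets]
    _ ≤ (K * (ENNReal.ofReal r * rcapa1 μ (Uᶜ ∩ ball x r) (ball x (2*r)))) / μ (ball x r) :=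
        ENNReal.div_le_div_right hb _
    _ = K * (ENNReal.ofReal r * rcapa1 μ (Uᶜ ∩ ball x r) (ball x (2*r)) / μ (ball x r)) := by
        rw [mul_div_assoc]

end Aux

/-- the 1-fine interior of the complement of the measure-theoretic
interior equals the 1-fine interior of the measure-theoretic exterior. -/
theorem fineInt_compl_mInt_eq_fineInt_mExt {X : Type*} [MetricSpace X] [CompleteSpace X] [MeasurableSpace X] [BorelSpace X]
    (μ : Measure X) (Cd CP lam : ℝ) (hCd : 1 ≤ Cd) (hCP : 0 < CP) (hlam : 1 ≤ lam)
    (hdbl : Doubling μ Cd) (hpoin : PoincareInequality μ CP lam)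
    (E : Set X) (hE : MeasurableSet E) :
    fineInt μ (mInt μ E)ᶜ = fineInt μ (mExt μ E) := by
  have hsub : ∀ U : Set X, FinelyOpen μ U → U ⊆ (mInt μ E)ᶜ → U ⊆ mExt μ E := by
    intro U hUf hUsub x hx
    show Tendsto (fun r : ℝ => μ (ball x r ∩ E) / μ (ball x r)) (𝓝[>] 0) (𝓝 0)
    have hd := fine_open_density hCd hCP hlam hdbl hpoin hUf hx
    have hnull := null_diff_mInt hCd hdbl hE
    refine tendsto_of_tendsto_of_tendsto_of_le_of_le' tendsto_const_nhds hd
      (Filter.Eventually.of_forall (fun r => zero_le))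
      (Filter.Eventually.of_forall (fun r => ?_))
    refine ENNReal.div_le_div_right ?_ _
    have hsubset : ball x r ∩ E ⊆ (ball x r \ U) ∪ (E \ mInt μ E) := by
      intro w hw
      by_cases hwU : w ∈ U
      · exact Or.inr ⟨hw.2, fun hmem => (hUsub hwU) hmem⟩
      · exact Or.inl ⟨hw.1, hwU⟩
    calc μ (ball x r ∩ E) ≤ μ ((ball x r \ U) ∪ (E \ mInt μ E)) := measure_mono hsubset
      _ ≤ μ (ball x r \ U) + μ (E \ mInt μ E) := measure_union_le _ _
      _ = μ (ball x r \ U) := by rw [hnull, add_zero]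
  apply Set.Subset.antisymm
  · refine Set.sUnion_subset (fun U hU => ?_)
    exact Set.subset_sUnion_of_mem ⟨hU.1, hsub U hU.1 hU.2⟩
  · refine Set.sUnion_subset (fun U hU => ?_)
    exact Set.subset_sUnion_of_mem ⟨hU.1, hU.2.trans (mExt_subset_compl_mInt hdbl hE)⟩

end Lahti
end
end

section
/- Let H ⊂ X be a Borel set with ℋ(H) < ∞. Then X ∖ H is a 1-quasiopen set. -/
open MeasureTheory Metric Filter
open scoped ENNReal NNReal Topology

noncomputable section

set_option linter.unusedSectionVars false

namespace Lahti

variable {X : Type*} [MetricSpace X] [MeasurableSpace X]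

/-! ### Auxiliary lemmas -/

section Aux

variable {μ : Measure X}

lemma abs_min_one_sub (a b : ℝ) : |min 1 a - min 1 b| ≤ |a - b| := by
  have := abs_min_sub_min_le_max (1:ℝ) a 1 b
  simpa using this

lemma abs_max_zero_sub (a b : ℝ) : |max 0 a - max 0 b| ≤ |a - b| := by
  rw [max_comm (0:ℝ) a, max_comm (0:ℝ) b]
  exact abs_max_sub_max_le_abs a b 0

/-- One-sided key real lemma: forward direction. -/
lemma onesided_fwd (K L : ℝ) (hK : 0 ≤ K) (hL : 0 ≤ L) (f : ℝ → ℝ) (S : Set ℝ)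
    (hfL : 0 ≤ f L) (hlip : ∀ t ∈ Set.Icc 0 L, |f 0 - f t| ≤ K * t)
    (hvan : ∀ t ∈ Set.Icc 0 L, f t ≠ 0 → t ∈ S) :
    ENNReal.ofReal (f 0 - f L) ≤ ENNReal.ofReal K * volume S := by
  rcases le_or_gt (f 0) (f L) with h | h
  · rw [ENNReal.ofReal_eq_zero.2 (by linarith : f 0 - f L ≤ 0)]; exact zero_le
  have hc : 0 < f 0 := lt_of_le_of_lt hfL h
  have hlipL : |f 0 - f L| ≤ K * L := hlip L ⟨hL, le_rfl⟩
  have hKpos : 0 < K := by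
    rcases hK.lt_or_eq with h' | h'
    · exact h'
    · exfalso
      have h1 : f 0 - f L ≤ |f 0 - f L| := le_abs_self _
      rw [← h'] at hlipL
      simp at hlipL
      linarith
  set m := min L (f 0 / K) with hm
  have hm0 : 0 ≤ m := le_min hL (by positivity)
  have hsub : Set.Ico 0 m ⊆ S := by
    rintro t ⟨ht0, htm⟩
    have htL : t ≤ L := le_trans htm.le (min_le_left _ _)
    refine hvan t ⟨ht0, htL⟩ ?_
    have h1 : f 0 - f t ≤ K * t := (le_abs_self _).trans (hlip t ⟨ht0, htL⟩)
    have h2 : t < f 0 / K := lt_of_lt_of_le htm (min_le_right _ _)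
    have h3 : K * t < f 0 := by
      calc K * t < K * (f 0 / K) := by
            exact mul_lt_mul_of_pos_left h2 hKpos
        _ = f 0 := by field_simp
    intro h0
    rw [h0] at h1
    linarith
  have hvol : ENNReal.ofReal m ≤ volume S := by
    calc ENNReal.ofReal m = volume (Set.Ico (0:ℝ) m) := by
          rw [Real.volume_Ico]; norm_num
      _ ≤ volume S := measure_mono hsub
  have hbound : f 0 - f L ≤ K * m := by
    rcases min_cases L (f 0 / K) with ⟨hmin, _⟩ | ⟨hmin, _⟩
    · rw [hm, hmin]
      exact (le_abs_self _).trans hlipL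
    · rw [hm, hmin, mul_div_cancel₀ _ (ne_of_gt hKpos)]
      linarith
  calc ENNReal.ofReal (f 0 - f L) ≤ ENNReal.ofReal (K * m) :=
        ENNReal.ofReal_le_ofReal hbound
    _ = ENNReal.ofReal K * ENNReal.ofReal m := ENNReal.ofReal_mul hK
    _ ≤ ENNReal.ofReal K * volume S := mul_le_mul_right hvol _

/-- One-sided key real lemma: backward direction. -/
lemma onesided_bwd (K L : ℝ) (hK : 0 ≤ K) (hL : 0 ≤ L) (f : ℝ → ℝ) (S : Set ℝ)
    (hf0 : 0 ≤ f 0) (hlip : ∀ t ∈ Set.Icc 0 L, |f L - f t| ≤ K * (L - t))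
    (hvan : ∀ t ∈ Set.Icc 0 L, f t ≠ 0 → t ∈ S) :
    ENNReal.ofReal (f L - f 0) ≤ ENNReal.ofReal K * volume S := by
  rcases le_or_gt (f L) (f 0) with h | h
  · rw [ENNReal.ofReal_eq_zero.2 (by linarith : f L - f 0 ≤ 0)]; exact zero_le
  have hc : 0 < f L := lt_of_le_of_lt hf0 h
  have hlipL : |f L - f 0| ≤ K * L := by simpa using hlip 0 ⟨le_rfl, hL⟩
  have hKpos : 0 < K := by
    rcases hK.lt_or_eq with h' | h'
    · exact h'
    · exfalso
      have h1 : f L - f 0 ≤ |f L - f 0| := le_abs_self _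
      rw [← h'] at hlipL
      simp at hlipL
      linarith
  set m := min L (f L / K) with hm
  have hm0 : 0 ≤ m := le_min hL (by positivity)
  have hsub : Set.Ioc (L - m) L ⊆ S := by
    rintro t ⟨htm, htL⟩
    have ht0 : 0 ≤ t := by
      have : m ≤ L := min_le_left _ _
      linarith
    refine hvan t ⟨ht0, htL⟩ ?_
    have h1 : f L - f t ≤ K * (L - t) := (le_abs_self _).trans (hlip t ⟨ht0, htL⟩)
    have h2 : L - t < f L / K := by
      have : L - t < m := by linarith
      exact lt_of_lt_of_le this (min_le_right _ _)
    have h3 : K * (L - t) < f L := by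
      calc K * (L - t) < K * (f L / K) := mul_lt_mul_of_pos_left h2 hKpos
        _ = f L := by field_simp
    intro h0
    rw [h0] at h1
    linarith
  have hvol : ENNReal.ofReal m ≤ volume S := by
    calc ENNReal.ofReal m = volume (Set.Ioc (L - m) L) := by
          rw [Real.volume_Ioc]; norm_num
      _ ≤ volume S := measure_mono hsub
  have hbound : f L - f 0 ≤ K * m := by
    rcases min_cases L (f L / K) with ⟨hmin, _⟩ | ⟨hmin, _⟩
    · rw [hm, hmin]
      exact (le_abs_self _).trans hlipL
    · rw [hm, hmin, mul_div_cancel₀ _ (ne_of_gt hKpos)]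
      linarith
  calc ENNReal.ofReal (f L - f 0) ≤ ENNReal.ofReal (K * m) :=
        ENNReal.ofReal_le_ofReal hbound
    _ = ENNReal.ofReal K * ENNReal.ofReal m := ENNReal.ofReal_mul hK
    _ ≤ ENNReal.ofReal K * volume S := mul_le_mul_right hvol _

/-- Key real lemma, absolute-value version. -/
lemma key_abs (K L : ℝ) (hK : 0 ≤ K) (hL : 0 ≤ L) (f : ℝ → ℝ) (S : Set ℝ)
    (hf0 : 0 ≤ f 0) (hfL : 0 ≤ f L)
    (hlip : ∀ s ∈ Set.Icc 0 L, ∀ t ∈ Set.Icc 0 L, |f s - f t| ≤ K * |s - t|)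
    (hvan : ∀ t ∈ Set.Icc 0 L, f t ≠ 0 → t ∈ S) :
    ENNReal.ofReal |f 0 - f L| ≤ ENNReal.ofReal K * volume S := by
  rcases le_total (f L) (f 0) with h | h
  · rw [abs_of_nonneg (by linarith)]
    refine onesided_fwd K L hK hL f S hfL ?_ hvan
    intro t ht
    have := hlip 0 ⟨le_rfl, hL⟩ t ht
    rwa [zero_sub, abs_neg, abs_of_nonneg ht.1] at this
  · rw [abs_sub_comm, abs_of_nonneg (by linarith)]
    refine onesided_bwd K L hK hL f S hf0 ?_ hvan
    intro t ht
    have h2 := hlip L ⟨hL, le_rfl⟩ t ht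
    have h3 : |L - t| = L - t := abs_of_nonneg (by linarith [ht.2])
    rwa [h3] at h2

end Aux

section Cutoff

variable [OpensMeasurableSpace X] {μ : Measure X}

/-- The Lipschitz cutoff function for a ball. -/
def cutoff (x₀ : X) (r : ℝ) (x : X) : ℝ :=
  max 0 (min 1 (2 - dist x x₀ / (2 * r)))

/-- The localized upper gradient of `cutoff`. -/
def cogrd (x₀ : X) (r : ℝ) : X → ℝ≥0∞ :=
  (closedBall x₀ (4 * r)).indicator (fun _ => ENNReal.ofReal (1 / (2 * r)))

lemma cutoff_nonneg (x₀ : X) (r : ℝ) (x : X) : 0 ≤ cutoff x₀ r x := le_max_left _ _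

lemma cutoff_le_one (x₀ : X) (r : ℝ) (x : X) : cutoff x₀ r x ≤ 1 :=
  max_le zero_le_one (min_le_left _ _)

lemma cutoff_eq_one {x₀ : X} {r : ℝ} (hr : 0 < r) {x : X} (hx : x ∈ ball x₀ (2 * r)) :
    cutoff x₀ r x = 1 := by
  have hd : dist x x₀ < 2 * r := mem_ball.1 hx
  have h1 : dist x x₀ / (2 * r) < 1 := (div_lt_one (by positivity)).2 hd
  rw [cutoff, min_eq_left (by linarith), max_eq_right zero_le_one]

lemma cutoff_eq_zero {x₀ : X} {r : ℝ} (hr : 0 < r) {x : X}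
    (hx : x ∉ closedBall x₀ (4 * r)) : cutoff x₀ r x = 0 := by
  have hd : 4 * r < dist x x₀ := by
    by_contra h
    exact hx (mem_closedBall.2 (by linarith))
  have h1 : 2 < dist x x₀ / (2 * r) := by
    rw [lt_div_iff₀ (by positivity)]
    linarith
  rw [cutoff, min_eq_right (by linarith), max_eq_left (by linarith)]

lemma cutoff_lip {x₀ : X} {r : ℝ} (hr : 0 < r) (x y : X) :
    |cutoff x₀ r x - cutoff x₀ r y| ≤ 1 / (2 * r) * dist x y := by
  set A := 2 - dist x x₀ / (2 * r)
  set B := 2 - dist y x₀ / (2 * r)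
  calc |cutoff x₀ r x - cutoff x₀ r y| ≤ |min 1 A - min 1 B| :=
        abs_max_zero_sub _ _
    _ ≤ |A - B| := abs_min_one_sub _ _
    _ = |dist y x₀ - dist x x₀| / (2 * r) := by
        rw [show A - B = (dist y x₀ - dist x x₀) / (2 * r) by ring]
        rw [abs_div, abs_of_pos (by positivity : (0:ℝ) < 2 * r)]
    _ ≤ dist x y / (2 * r) := by
        have h1 : |dist y x₀ - dist x x₀| ≤ dist y x := abs_dist_sub_le y x x₀
        rw [dist_comm y x] at h1
        gcongr
    _ = 1 / (2 * r) * dist x y := by ring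

lemma cutoff_continuous (x₀ : X) (r : ℝ) : Continuous (cutoff x₀ r) :=
  continuous_const.max (continuous_const.min
    (continuous_const.sub ((continuous_id.dist continuous_const).div_const _)))

lemma cogrd_measurable (x₀ : X) (r : ℝ) : Measurable (cogrd x₀ r) :=
  measurable_const.indicator measurableSet_closedBall

lemma cogrd_lintegral (x₀ : X) (r : ℝ) :
    ∫⁻ x, cogrd x₀ r x ∂μ = ENNReal.ofReal (1 / (2 * r)) * μ (closedBall x₀ (4 * r)) := by
  rw [cogrd, lintegral_indicator measurableSet_closedBall, setLIntegral_const, mul_comm]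

/-- The upper gradient inequality for the cutoff pair on an arbitrary curve. -/
lemma cutoff_ug (x₀ : X) {r : ℝ} (hr : 0 < r) (γ : Curve X) :
    ENNReal.ofReal |cutoff x₀ r (γ.toFun 0) - cutoff x₀ r (γ.toFun γ.len)|
      ≤ curveIntegral (cogrd x₀ r) γ := by
  set L := γ.len with hLdef
  set K : ℝ := 1 / (2 * r) with hKdef
  have hK : 0 ≤ K := by positivity
  set f : ℝ → ℝ := fun t => cutoff x₀ r (γ.toFun t) with hfdef
  set S : Set ℝ := Set.Icc 0 L ∩ γ.toFun ⁻¹' (closedBall x₀ (4 * r)) with hSdef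
  have hSclosed : IsClosed S :=
    γ.lipschitz.continuousOn.preimage_isClosed_of_isClosed isClosed_Icc Metric.isClosed_closedBall
  have hlip : ∀ s ∈ Set.Icc (0:ℝ) L, ∀ t ∈ Set.Icc (0:ℝ) L, |f s - f t| ≤ K * |s - t| := by
    intro s hs t ht
    calc |f s - f t| ≤ K * dist (γ.toFun s) (γ.toFun t) := cutoff_lip hr _ _
      _ ≤ K * |s - t| := by
          have h1 : dist (γ.toFun s) (γ.toFun t) ≤ 1 * dist s t :=
            γ.lipschitz.dist_le_mul s hs t ht
          rw [one_mul] at h1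
          rw [Real.dist_eq] at h1
          exact mul_le_mul_of_nonneg_left h1 hK
  have hvan : ∀ t ∈ Set.Icc (0:ℝ) L, f t ≠ 0 → t ∈ S := by
    intro t ht hft
    refine ⟨ht, ?_⟩
    by_contra hx
    exact hft (cutoff_eq_zero hr hx)
  have key : ENNReal.ofReal |f 0 - f L| ≤ ENNReal.ofReal K * volume S :=
    key_abs K L hK γ.len_nonneg f S (cutoff_nonneg _ _ _) (cutoff_nonneg _ _ _) hlip hvan
  refine key.trans ?_
  have hle : ∀ t ∈ Set.Icc (0:ℝ) L,
      S.indicator (fun _ => ENNReal.ofReal K) t ≤ cogrd x₀ r (γ.toFun t) := by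
    intro t ht
    by_cases hts : t ∈ S
    · rw [Set.indicator_of_mem hts, cogrd,
        Set.indicator_of_mem (Set.mem_preimage.1 hts.2)]
    · rw [Set.indicator_of_notMem hts]
      exact zero_le
  have heq : ENNReal.ofReal K * volume S
      = ∫⁻ t in Set.Icc (0:ℝ) L, S.indicator (fun _ => ENNReal.ofReal K) t := by
    rw [lintegral_indicator hSclosed.measurableSet, setLIntegral_const,
      Measure.restrict_apply hSclosed.measurableSet,
      Set.inter_eq_self_of_subset_left Set.inter_subset_left, mul_comm]
  rw [heq]
  refine lintegral_mono_ae ?_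
  exact (ae_restrict_iff' measurableSet_Icc).2 (ae_of_all _ hle)

end Cutoff

section Test

variable [OpensMeasurableSpace X] {μ : Measure X}

lemma mod1_of_allUG {u : X → ℝ} {g : X → ℝ≥0∞} (hall : ∀ γ : Curve X, ugIneq u g γ) :
    Mod1 μ {γ : Curve X | γ.In Set.univ ∧ ¬ ugIneq u g γ} = 0 := by
  refine le_antisymm ?_ (zero_le)
  have h0 : Mod1 μ {γ : Curve X | γ.In Set.univ ∧ ¬ ugIneq u g γ}
      ≤ ∫⁻ x, (fun _ => (0:ℝ≥0∞)) x ∂μ := by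
    refine iInf₂_le _ ⟨measurable_const, ?_⟩
    intro γ hγ
    exact absurd (hall γ) hγ.2
  simpa using h0

lemma isWUG_of_allUG {u : X → ℝ} {g : X → ℝ≥0∞} (hg : Measurable g)
    (hall : ∀ γ : Curve X, ugIneq u g γ) : IsWUG μ u g Set.univ :=
  ⟨hg, mod1_of_allUG hall⟩

lemma capa1_empty (μ : Measure X) : capa1 μ (∅ : Set X) = 0 := by
  refine le_antisymm ?_ (zero_le)
  have hWUG : IsWUG μ (fun _ => (0:ℝ)) (fun _ => (0:ℝ≥0∞)) Set.univ := by
    refine isWUG_of_allUG measurable_const ?_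
    intro γ
    unfold ugIneq
    simp
  have heD1 : eD1 μ (fun _ => (0:ℝ)) Set.univ = 0 := by
    refine le_antisymm ?_ (zero_le)
    have h0 : (⨅ (g : X → ℝ≥0∞) (_ : IsWUG μ (fun _ => (0:ℝ)) g Set.univ),
        ∫⁻ x in Set.univ, g x ∂μ) ≤ ∫⁻ x in Set.univ, (fun _ : X => (0:ℝ≥0∞)) x ∂μ :=
      iInf₂_le (fun _ : X => (0:ℝ≥0∞)) hWUG
    rw [eD1]
    simpa using h0
  have heL1 : eL1 μ (fun _ => (0:ℝ)) Set.univ = 0 := by simp [eL1]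
  have heN : eN11 μ (fun _ => (0:ℝ)) Set.univ = 0 := by rw [eN11, heD1, heL1, add_zero]
  have h0 : capa1 μ (∅ : Set X) ≤ eN11 μ (fun _ => (0:ℝ)) Set.univ := by
    refine iInf₂_le _ ⟨⟨measurable_const, ?_⟩, ?_⟩
    · rw [heN]; exact ENNReal.zero_lt_top
    · intro x hx; exact absurd hx (Set.notMem_empty x)
  rw [heN] at h0
  exact h0

variable (c : ℕ → X) (rr : ℕ → ℝ)

/-- The per-ball cutoff function of a covering. -/
def ufun (j : ℕ) (x : X) : ℝ := if 0 < rr j then cutoff (c j) (rr j) x else 0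

/-- The per-ball gradient of a covering. -/
def gfun (j : ℕ) : X → ℝ≥0∞ := if 0 < rr j then cogrd (c j) (rr j) else fun _ => 0

/-- The test function of a covering. -/
def testu (x : X) : ℝ := (⨆ j, ENNReal.ofReal (ufun c rr j x)).toReal

/-- The test upper gradient of a covering. -/
def testg (x : X) : ℝ≥0∞ := ∑' j, gfun c rr j x

lemma ufun_nonneg (j : ℕ) (x : X) : 0 ≤ ufun c rr j x := by
  unfold ufun; split_ifs; exacts [cutoff_nonneg _ _ _, le_rfl]

lemma ufun_le_one (j : ℕ) (x : X) : ufun c rr j x ≤ 1 := by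
  unfold ufun; split_ifs; exacts [cutoff_le_one _ _ _, zero_le_one]

lemma ufun_measurable (j : ℕ) : Measurable (fun x => ENNReal.ofReal (ufun c rr j x)) := by
  unfold ufun; split_ifs with h
  · exact ENNReal.measurable_ofReal.comp (cutoff_continuous _ _).measurable
  · simp

lemma gfun_measurable (j : ℕ) : Measurable (gfun c rr j) := by
  unfold gfun; split_ifs with h
  · exact cogrd_measurable _ _
  · exact measurable_const

lemma testg_measurable : Measurable (testg c rr) :=
  Measurable.ennreal_tsum (gfun_measurable c rr)

lemma testu_measurable : Measurable (testu c rr) :=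
  (Measurable.iSup (ufun_measurable c rr)).ennreal_toReal

lemma esup_le_one (x : X) : (⨆ j, ENNReal.ofReal (ufun c rr j x)) ≤ 1 :=
  iSup_le fun j => ENNReal.ofReal_le_one.2 (ufun_le_one c rr j x)

lemma esup_ne_top (x : X) : (⨆ j, ENNReal.ofReal (ufun c rr j x)) ≠ ∞ :=
  (lt_of_le_of_lt (esup_le_one c rr x) ENNReal.one_lt_top).ne

lemma ufun_ug (j : ℕ) (γ : Curve X) :
    ENNReal.ofReal |ufun c rr j (γ.toFun 0) - ufun c rr j (γ.toFun γ.len)|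
      ≤ curveIntegral (gfun c rr j) γ := by
  unfold ufun gfun; split_ifs with h
  · exact cutoff_ug _ h γ
  · simp

lemma gfun_le_testg (j : ℕ) (x : X) : gfun c rr j x ≤ testg c rr x :=
  ENNReal.le_tsum j

/-- The test pair satisfies the upper gradient inequality on every curve. -/
lemma testu_ug (γ : Curve X) : ugIneq (testu c rr) (testg c rr) γ := by
  unfold ugIneq
  set T := curveIntegral (testg c rr) γ with hTdef
  by_cases hT : T = ∞
  · rw [hT]; exact le_top
  set a := γ.toFun 0
  set b := γ.toFun γ.len
  have hJle : ∀ j, curveIntegral (gfun c rr j) γ ≤ T := by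
    intro j
    exact lintegral_mono fun t => gfun_le_testg c rr j _
  have hstep : ∀ (x y : X),
      (∀ j, ENNReal.ofReal |ufun c rr j x - ufun c rr j y| ≤ T) →
      (⨆ j, ENNReal.ofReal (ufun c rr j x)) ≤ (⨆ j, ENNReal.ofReal (ufun c rr j y)) + T := by
    intro x y hxy
    refine iSup_le fun j => ?_
    have h1 : ufun c rr j x ≤ ufun c rr j y + |ufun c rr j x - ufun c rr j y| := by
      have := le_abs_self (ufun c rr j x - ufun c rr j y)
      linarith
    calc ENNReal.ofReal (ufun c rr j x)
        ≤ ENNReal.ofReal (ufun c rr j y + |ufun c rr j x - ufun c rr j y|) :=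
          ENNReal.ofReal_le_ofReal h1
      _ = ENNReal.ofReal (ufun c rr j y) + ENNReal.ofReal |ufun c rr j x - ufun c rr j y| :=
          ENNReal.ofReal_add (ufun_nonneg c rr j y) (abs_nonneg _)
      _ ≤ (⨆ i, ENNReal.ofReal (ufun c rr i y)) + T :=
          add_le_add (le_iSup (fun i => ENNReal.ofReal (ufun c rr i y)) j) (hxy j)
  have hab : ∀ j, ENNReal.ofReal |ufun c rr j a - ufun c rr j b| ≤ T :=
    fun j => (ufun_ug c rr j γ).trans (hJle j)
  have hba : ∀ j, ENNReal.ofReal |ufun c rr j b - ufun c rr j a| ≤ T := by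
    intro j
    rw [abs_sub_comm]
    exact hab j
  have h1 := hstep a b hab
  have h2 := hstep b a hba
  set Ea := ⨆ j, ENNReal.ofReal (ufun c rr j a) with hEa
  set Eb := ⨆ j, ENNReal.ofReal (ufun c rr j b) with hEb
  have hEaT : Ea ≠ ∞ := esup_ne_top c rr a
  have hEbT : Eb ≠ ∞ := esup_ne_top c rr b
  have hta : testu c rr a = Ea.toReal := rfl
  have htb : testu c rr b = Eb.toReal := rfl
  have hr1 : testu c rr a ≤ testu c rr b + T.toReal := by
    rw [hta, htb, ← ENNReal.toReal_add hEbT hT]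
    exact ENNReal.toReal_mono (ENNReal.add_ne_top.2 ⟨hEbT, hT⟩) h1
  have hr2 : testu c rr b ≤ testu c rr a + T.toReal := by
    rw [hta, htb, ← ENNReal.toReal_add hEaT hT]
    exact ENNReal.toReal_mono (ENNReal.add_ne_top.2 ⟨hEaT, hT⟩) h2
  have habs : |testu c rr a - testu c rr b| ≤ T.toReal :=
    abs_sub_le_iff.2 ⟨by linarith, by linarith⟩
  calc ENNReal.ofReal |testu c rr a - testu c rr b| ≤ ENNReal.ofReal T.toReal :=
        ENNReal.ofReal_le_ofReal habs
    _ = T := ENNReal.ofReal_toReal hT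

end Test

section Cover

variable [OpensMeasurableSpace X] {μ : Measure X}

lemma doubling_four {Cd : ℝ} (hdbl : Doubling μ Cd) {x : X} {r : ℝ} (hr : 0 < r) :
    μ (closedBall x (4 * r)) ≤ ENNReal.ofReal Cd ^ 3 * μ (ball x r) := by
  have h1 : μ (ball x (2 * r)) ≤ ENNReal.ofReal Cd * μ (ball x r) := (hdbl x r hr).2.1
  have h2 : μ (ball x (4 * r)) ≤ ENNReal.ofReal Cd * μ (ball x (2 * r)) := by
    have := (hdbl x (2 * r) (by positivity)).2.1
    rwa [show 2 * (2 * r) = 4 * r by ring] at this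
  have h3 : μ (ball x (8 * r)) ≤ ENNReal.ofReal Cd * μ (ball x (4 * r)) := by
    have := (hdbl x (4 * r) (by positivity)).2.1
    rwa [show 2 * (4 * r) = 8 * r by ring] at this
  have h0 : μ (closedBall x (4 * r)) ≤ μ (ball x (8 * r)) :=
    measure_mono (closedBall_subset_ball (by linarith))
  calc μ (closedBall x (4 * r)) ≤ μ (ball x (8 * r)) := h0
    _ ≤ ENNReal.ofReal Cd * μ (ball x (4 * r)) := h3
    _ ≤ ENNReal.ofReal Cd * (ENNReal.ofReal Cd * μ (ball x (2 * r))) := mul_le_mul_right h2 _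
    _ ≤ ENNReal.ofReal Cd * (ENNReal.ofReal Cd * (ENNReal.ofReal Cd * μ (ball x r))) := by
        exact mul_le_mul_right (mul_le_mul_right h1 _) _
    _ = ENNReal.ofReal Cd ^ 3 * μ (ball x r) := by ring

lemma gfun_lintegral_le {Cd : ℝ} (hdbl : Doubling μ Cd) (c : ℕ → X) (rr : ℕ → ℝ) (j : ℕ) :
    ∫⁻ x, gfun c rr j x ∂μ
      ≤ ENNReal.ofReal Cd ^ 3 * (μ (ball (c j) (rr j)) / ENNReal.ofReal (rr j)) := by
  unfold gfun; split_ifs with h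
  · rw [cogrd_lintegral]
    have h2r : (0:ℝ) < 2 * rr j := by positivity
    have hinv : ENNReal.ofReal (1 / (2 * rr j)) = (ENNReal.ofReal (2 * rr j))⁻¹ := by
      rw [one_div, ENNReal.ofReal_inv_of_pos h2r]
    calc ENNReal.ofReal (1 / (2 * rr j)) * μ (closedBall (c j) (4 * rr j))
        ≤ ENNReal.ofReal (1 / (2 * rr j)) * (ENNReal.ofReal Cd ^ 3 * μ (ball (c j) (rr j))) :=
          mul_le_mul_right (doubling_four hdbl h) _
      _ = ENNReal.ofReal Cd ^ 3 * (μ (ball (c j) (rr j)) / ENNReal.ofReal (2 * rr j)) := by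
          rw [hinv, ENNReal.div_eq_inv_mul]; ring
      _ ≤ ENNReal.ofReal Cd ^ 3 * (μ (ball (c j) (rr j)) / ENNReal.ofReal (rr j)) := by
          refine mul_le_mul_right (ENNReal.div_le_div_left ?_ _) _
          exact ENNReal.ofReal_le_ofReal (by linarith)
  · simp

lemma ufun_lintegral_le {Cd : ℝ} (hdbl : Doubling μ Cd) (c : ℕ → X) (rr : ℕ → ℝ) (j : ℕ)
    (hr1 : rr j ≤ 1) :
    ∫⁻ x, ENNReal.ofReal (ufun c rr j x) ∂μ
      ≤ ENNReal.ofReal Cd ^ 3 * (μ (ball (c j) (rr j)) / ENNReal.ofReal (rr j)) := by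
  by_cases h : 0 < rr j
  · have hpt : ∀ x, ENNReal.ofReal (ufun c rr j x)
        ≤ (closedBall (c j) (4 * rr j)).indicator (fun _ => (1:ℝ≥0∞)) x := by
      intro x
      by_cases hx : x ∈ closedBall (c j) (4 * rr j)
      · rw [Set.indicator_of_mem hx]
        exact ENNReal.ofReal_le_one.2 (ufun_le_one c rr j x)
      · rw [Set.indicator_of_notMem hx]
        unfold ufun
        rw [if_pos h, cutoff_eq_zero h hx]
        simp
    have hint : ∫⁻ x, ENNReal.ofReal (ufun c rr j x) ∂μ ≤ μ (closedBall (c j) (4 * rr j)) := by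
      calc ∫⁻ x, ENNReal.ofReal (ufun c rr j x) ∂μ
          ≤ ∫⁻ x, (closedBall (c j) (4 * rr j)).indicator (fun _ => (1:ℝ≥0∞)) x ∂μ :=
            lintegral_mono hpt
        _ = μ (closedBall (c j) (4 * rr j)) := by
            rw [lintegral_indicator measurableSet_closedBall, setLIntegral_const, one_mul]
    have hne0 : ENNReal.ofReal (rr j) ≠ 0 := by
      simp only [ne_eq, ENNReal.ofReal_eq_zero, not_le]; exact h
    have hneT : ENNReal.ofReal (rr j) ≠ ∞ := ENNReal.ofReal_ne_top
    have hball : μ (ball (c j) (rr j))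
        ≤ μ (ball (c j) (rr j)) / ENNReal.ofReal (rr j) := by
      conv_lhs => rw [← ENNReal.div_mul_cancel hne0 hneT (b := μ (ball (c j) (rr j)))]
      calc μ (ball (c j) (rr j)) / ENNReal.ofReal (rr j) * ENNReal.ofReal (rr j)
          ≤ μ (ball (c j) (rr j)) / ENNReal.ofReal (rr j) * 1 :=
            mul_le_mul_right (ENNReal.ofReal_le_one.2 hr1) _
        _ = μ (ball (c j) (rr j)) / ENNReal.ofReal (rr j) := mul_one _
    calc ∫⁻ x, ENNReal.ofReal (ufun c rr j x) ∂μ ≤ μ (closedBall (c j) (4 * rr j)) := hint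
      _ ≤ ENNReal.ofReal Cd ^ 3 * μ (ball (c j) (rr j)) := doubling_four hdbl h
      _ ≤ ENNReal.ofReal Cd ^ 3 * (μ (ball (c j) (rr j)) / ENNReal.ofReal (rr j)) :=
          mul_le_mul_right hball _
  · unfold ufun
    simp [h]

lemma capa1_le_of_cover {Cd : ℝ} (hCd : 1 ≤ Cd) (hdbl : Doubling μ Cd)
    (c : ℕ → X) (rr : ℕ → ℝ) (h01 : ∀ j, 0 ≤ rr j ∧ rr j ≤ 1) :
    capa1 μ (⋃ j, ball (c j) (2 * rr j))
      ≤ 2 * ENNReal.ofReal Cd ^ 3 * ∑' j, μ (ball (c j) (rr j)) / ENNReal.ofReal (rr j) := by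
  set Cd' := ENNReal.ofReal Cd with hCd'
  have hCd'1 : 1 ≤ Cd' := by rw [hCd']; exact ENNReal.one_le_ofReal.2 hCd
  have hCd'0 : Cd' ≠ 0 := by intro h0; rw [h0] at hCd'1; simp at hCd'1
  have hCd'T : Cd' ≠ ∞ := ENNReal.ofReal_ne_top
  set Stot := ∑' j, μ (ball (c j) (rr j)) / ENNReal.ofReal (rr j) with hStot
  by_cases htop : Stot = ∞
  · rw [htop, ENNReal.mul_top (mul_ne_zero (by norm_num) (pow_ne_zero 3 hCd'0))]
    exact le_top
  have hL1 : eL1 μ (testu c rr) Set.univ ≤ Cd' ^ 3 * Stot := by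
    rw [eL1, Measure.restrict_univ]
    have hpt : ∀ x, ENNReal.ofReal |testu c rr x| ≤ ∑' j, ENNReal.ofReal (ufun c rr j x) := by
      intro x
      have h1 : |testu c rr x| = testu c rr x := abs_of_nonneg ENNReal.toReal_nonneg
      rw [h1]
      have h2 : ENNReal.ofReal (testu c rr x)
          = ⨆ j, ENNReal.ofReal (ufun c rr j x) := by
        rw [testu, ENNReal.ofReal_toReal (esup_ne_top c rr x)]
      rw [h2]
      exact iSup_le fun j => ENNReal.le_tsum j
    calc ∫⁻ x, ENNReal.ofReal |testu c rr x| ∂μ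
        ≤ ∫⁻ x, ∑' j, ENNReal.ofReal (ufun c rr j x) ∂μ := lintegral_mono hpt
      _ = ∑' j, ∫⁻ x, ENNReal.ofReal (ufun c rr j x) ∂μ :=
          lintegral_tsum fun j => (ufun_measurable c rr j).aemeasurable
      _ ≤ ∑' j, Cd' ^ 3 * (μ (ball (c j) (rr j)) / ENNReal.ofReal (rr j)) :=
          ENNReal.tsum_le_tsum fun j => ufun_lintegral_le hdbl c rr j (h01 j).2
      _ = Cd' ^ 3 * Stot := ENNReal.tsum_mul_left
  have hD1 : eD1 μ (testu c rr) Set.univ ≤ Cd' ^ 3 * Stot := by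
    have hWUG : IsWUG μ (testu c rr) (testg c rr) Set.univ :=
      ⟨testg_measurable c rr, mod1_of_allUG (testu_ug c rr)⟩
    have h0 : (⨅ (g : X → ℝ≥0∞) (_ : IsWUG μ (testu c rr) g Set.univ),
        ∫⁻ x in Set.univ, g x ∂μ) ≤ ∫⁻ x in Set.univ, testg c rr x ∂μ :=
      iInf₂_le (testg c rr) hWUG
    rw [eD1]
    refine h0.trans ?_
    rw [Measure.restrict_univ]
    calc ∫⁻ x, testg c rr x ∂μ = ∑' j, ∫⁻ x, gfun c rr j x ∂μ := by
          unfold testg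
          exact lintegral_tsum fun j => (gfun_measurable c rr j).aemeasurable
      _ ≤ ∑' j, Cd' ^ 3 * (μ (ball (c j) (rr j)) / ENNReal.ofReal (rr j)) :=
          ENNReal.tsum_le_tsum fun j => gfun_lintegral_le hdbl c rr j
      _ = Cd' ^ 3 * Stot := ENNReal.tsum_mul_left
  have hN : eN11 μ (testu c rr) Set.univ ≤ 2 * Cd' ^ 3 * Stot := by
    rw [eN11]
    calc eL1 μ (testu c rr) Set.univ + eD1 μ (testu c rr) Set.univ
        ≤ Cd' ^ 3 * Stot + Cd' ^ 3 * Stot := add_le_add hL1 hD1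
      _ = 2 * Cd' ^ 3 * Stot := by ring
  have hmem : MemN11 μ (testu c rr) Set.univ := by
    refine ⟨testu_measurable c rr, lt_of_le_of_lt hN ?_⟩
    refine ENNReal.mul_lt_top ?_ (lt_top_iff_ne_top.2 htop)
    exact ENNReal.mul_lt_top (by norm_num) (ENNReal.pow_lt_top hCd'T.lt_top)
  have hge : ∀ x ∈ ⋃ j, ball (c j) (2 * rr j), 1 ≤ testu c rr x := by
    intro x hx
    obtain ⟨j, hj⟩ := Set.mem_iUnion.1 hx
    have hrj : 0 < rr j := by
      have hd := mem_ball.1 hj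
      have := dist_nonneg (x := x) (y := c j)
      linarith
    have h1 : ufun c rr j x = 1 := by
      unfold ufun
      rw [if_pos hrj, cutoff_eq_one hrj hj]
    have h2 : (1:ℝ≥0∞) ≤ ⨆ i, ENNReal.ofReal (ufun c rr i x) := by
      refine le_trans ?_ (le_iSup _ j)
      rw [h1]
      simp
    calc (1:ℝ) = (1:ℝ≥0∞).toReal := by simp
      _ ≤ testu c rr x := ENNReal.toReal_mono (esup_ne_top c rr x) h2
  have hcap : capa1 μ (⋃ j, ball (c j) (2 * rr j)) ≤ eN11 μ (testu c rr) Set.univ := by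
    have h0 : (⨅ (u : X → ℝ) (_ : MemN11 μ u Set.univ ∧
        ∀ x ∈ ⋃ j, ball (c j) (2 * rr j), 1 ≤ u x), eN11 μ u Set.univ)
        ≤ eN11 μ (testu c rr) Set.univ := iInf₂_le (testu c rr) ⟨hmem, hge⟩
    rw [capa1]
    exact h0
  exact hcap.trans hN

end Cover

section CodimHMeasure

variable {μ : Measure X}

lemma hContent_le {R : ℝ} {A : Set X} (c : ℕ → X) (r : ℕ → ℝ)
    (h1 : ∀ j, 0 ≤ r j ∧ r j ≤ R) (h2 : A ⊆ ⋃ j, ball (c j) (r j)) :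
    hContent μ R A ≤ ∑' j, μ (ball (c j) (r j)) / ENNReal.ofReal (r j) := by
  rw [hContent]
  exact iInf₂_le_of_le c r (iInf_le_of_le ⟨h1, h2⟩ le_rfl)

lemma exists_cover_of_lt {R : ℝ} {A : Set X} {b : ℝ≥0∞} (h : hContent μ R A < b) :
    ∃ (c : ℕ → X) (r : ℕ → ℝ), (∀ j, 0 ≤ r j ∧ r j ≤ R) ∧
      (A ⊆ ⋃ j, ball (c j) (r j)) ∧
      ∑' j, μ (ball (c j) (r j)) / ENNReal.ofReal (r j) < b := by
  rw [hContent] at h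
  simp only [iInf_lt_iff] at h
  obtain ⟨c, r, ⟨h1, h2⟩, hlt⟩ := h
  exact ⟨c, r, h1, h2, hlt⟩

lemma hContent_mono {R : ℝ} {A B : Set X} (h : A ⊆ B) : hContent μ R A ≤ hContent μ R B := by
  rw [hContent, hContent]
  refine le_iInf fun c => le_iInf fun r => le_iInf fun hp => ?_
  exact iInf₂_le_of_le c r (iInf_le_of_le ⟨hp.1, h.trans hp.2⟩ le_rfl)

lemma hContent_anti {R₁ R₂ : ℝ} {A : Set X} (h : R₁ ≤ R₂) :
    hContent μ R₂ A ≤ hContent μ R₁ A := by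
  rw [hContent, hContent]
  refine le_iInf fun c => le_iInf fun r => le_iInf fun hp => ?_
  exact iInf₂_le_of_le c r
    (iInf_le_of_le ⟨fun j => ⟨(hp.1 j).1, (hp.1 j).2.trans h⟩, hp.2⟩ le_rfl)

lemma hContent_le_codimH {R : ℝ} {A : Set X} (hR : 0 < R) :
    hContent μ R A ≤ codimH μ A := by
  rw [codimH]
  exact le_iSup₂ (f := fun (R : ℝ) (_ : 0 < R) => hContent μ R A) R hR

lemma codimH_mono {A B : Set X} (h : A ⊆ B) : codimH μ A ≤ codimH μ B := by
  rw [codimH]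
  exact iSup₂_le fun R hR => (hContent_mono h).trans (hContent_le_codimH hR)

lemma codimH_empty [Nonempty X] : codimH μ (∅ : Set X) = 0 := by
  refine le_antisymm ?_ (zero_le)
  rw [codimH]
  refine iSup₂_le fun R hR => ?_
  have h := hContent_le (μ := μ) (R := R) (A := (∅ : Set X))
    (fun _ => Classical.arbitrary X) (fun _ => 0)
    (fun j => ⟨le_rfl, hR.le⟩) (by simp)
  simpa [Metric.ball_zero] using h

lemma codimH_iUnion_le (A : ℕ → Set X) :
    codimH μ (⋃ n, A n) ≤ ∑' n, codimH μ (A n) := by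
  rw [codimH]
  refine iSup₂_le fun R hR => ?_
  by_cases htop : (∑' n, codimH μ (A n)) = ∞
  · rw [htop]; exact le_top
  refine ENNReal.le_of_forall_pos_le_add fun ε hε _ => ?_
  obtain ⟨δ, hδ0, hδsum⟩ :=
    ENNReal.exists_pos_sum_of_countable' (ENNReal.coe_ne_zero.2 hε.ne') ℕ
  have hcov : ∀ n, ∃ (cc : ℕ → X) (r : ℕ → ℝ), (∀ j, 0 ≤ r j ∧ r j ≤ R) ∧
      (A n ⊆ ⋃ j, ball (cc j) (r j)) ∧
      ∑' j, μ (ball (cc j) (r j)) / ENNReal.ofReal (r j) < codimH μ (A n) + δ n := by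
    intro n
    have hfin : codimH μ (A n) ≠ ∞ := ENNReal.ne_top_of_tsum_ne_top htop n
    have hlt : hContent μ R (A n) < codimH μ (A n) + δ n :=
      lt_of_le_of_lt (hContent_le_codimH hR) (ENNReal.lt_add_right hfin (hδ0 n).ne')
    exact exists_cover_of_lt hlt
  choose cc r hr hc hsum using hcov
  set e := (Denumerable.eqv (ℕ × ℕ)).symm with he
  have hle : hContent μ R (⋃ n, A n)
      ≤ ∑' k, μ (ball (cc (e k).1 (e k).2) (r (e k).1 (e k).2))
          / ENNReal.ofReal (r (e k).1 (e k).2) := by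
    refine hContent_le _ _ (fun k => hr _ _) ?_
    intro x hx
    obtain ⟨n, hn⟩ := Set.mem_iUnion.1 hx
    obtain ⟨j, hj⟩ := Set.mem_iUnion.1 (hc n hn)
    refine Set.mem_iUnion.2 ⟨e.symm (n, j), ?_⟩
    simpa [Equiv.apply_symm_apply] using hj
  refine hle.trans ?_
  have heq : (∑' k, μ (ball (cc (e k).1 (e k).2) (r (e k).1 (e k).2))
      / ENNReal.ofReal (r (e k).1 (e k).2))
      = ∑' (p : ℕ × ℕ), μ (ball (cc p.1 p.2) (r p.1 p.2)) / ENNReal.ofReal (r p.1 p.2) :=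
    e.tsum_eq (fun p : ℕ × ℕ => μ (ball (cc p.1 p.2) (r p.1 p.2)) / ENNReal.ofReal (r p.1 p.2))
  rw [heq, ENNReal.tsum_prod (f := fun n j => μ (ball (cc n j) (r n j)) / ENNReal.ofReal (r n j))]
  calc ∑' n, ∑' j, μ (ball (cc n j) (r n j)) / ENNReal.ofReal (r n j)
      ≤ ∑' n, (codimH μ (A n) + δ n) := ENNReal.tsum_le_tsum fun n => (hsum n).le
    _ = (∑' n, codimH μ (A n)) + ∑' n, δ n := ENNReal.tsum_add
    _ ≤ (∑' n, codimH μ (A n)) + ε := add_le_add_right hδsum.le _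

lemma codimH_repr {d : ℝ} (hd : 0 < d) (A : Set X) :
    codimH μ A = ⨆ R : {R : ℝ // 0 < R ∧ R ≤ d}, hContent μ R.1 A := by
  apply le_antisymm
  · rw [codimH]
    refine iSup₂_le fun R hR => ?_
    refine le_trans (hContent_anti (min_le_left R d)) ?_
    exact le_iSup (fun (p : {R : ℝ // 0 < R ∧ R ≤ d}) => hContent μ p.1 A)
      ⟨min R d, lt_min hR hd, min_le_right _ _⟩
  · exact iSup_le fun p => hContent_le_codimH p.2.1

lemma hContent_add_le {s t : Set X} {d : ℝ} (hd : 0 < d)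
    (hsep : ∀ x ∈ s, ∀ y ∈ t, d ≤ dist x y) {R : ℝ} (hR : 0 < R) (hRd : R ≤ d / 4) :
    hContent μ R s + hContent μ R t ≤ hContent μ R (s ∪ t) := by
  classical
  conv_rhs => rw [hContent]
  refine le_iInf fun c => le_iInf fun r => le_iInf fun hp => ?_
  obtain ⟨h1, h2⟩ := hp
  set rs : ℕ → ℝ := fun j => if (ball (c j) (r j) ∩ s).Nonempty then r j else 0 with hrs
  set rt : ℕ → ℝ := fun j => if (ball (c j) (r j) ∩ t).Nonempty then r j else 0 with hrt
  have hrs_eq : ∀ j, (ball (c j) (r j) ∩ s).Nonempty → rs j = r j := by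
    intro j hj; simp only [hrs, if_pos hj]
  have hrt_eq : ∀ j, (ball (c j) (r j) ∩ t).Nonempty → rt j = r j := by
    intro j hj; simp only [hrt, if_pos hj]
  have hs_le : hContent μ R s ≤ ∑' j, μ (ball (c j) (rs j)) / ENNReal.ofReal (rs j) := by
    refine hContent_le c rs (fun j => ?_) ?_
    · by_cases hj : (ball (c j) (r j) ∩ s).Nonempty
      · rw [hrs_eq j hj]; exact h1 j
      · simp only [hrs, if_neg hj]; exact ⟨le_rfl, hR.le⟩
    · intro x hx
      obtain ⟨j, hj⟩ := Set.mem_iUnion.1 (h2 (Set.mem_union_left _ hx))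
      refine Set.mem_iUnion.2 ⟨j, ?_⟩
      rwa [hrs_eq j ⟨x, hj, hx⟩]
  have ht_le : hContent μ R t ≤ ∑' j, μ (ball (c j) (rt j)) / ENNReal.ofReal (rt j) := by
    refine hContent_le c rt (fun j => ?_) ?_
    · by_cases hj : (ball (c j) (r j) ∩ t).Nonempty
      · rw [hrt_eq j hj]; exact h1 j
      · simp only [hrt, if_neg hj]; exact ⟨le_rfl, hR.le⟩
    · intro x hx
      obtain ⟨j, hj⟩ := Set.mem_iUnion.1 (h2 (Set.mem_union_right _ hx))
      refine Set.mem_iUnion.2 ⟨j, ?_⟩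
      rwa [hrt_eq j ⟨x, hj, hx⟩]
  refine le_trans (add_le_add hs_le ht_le) ?_
  rw [← ENNReal.tsum_add]
  refine ENNReal.tsum_le_tsum fun j => ?_
  by_cases hsj : (ball (c j) (r j) ∩ s).Nonempty <;>
    by_cases htj : (ball (c j) (r j) ∩ t).Nonempty
  · exfalso
    obtain ⟨x, hxb, hxs⟩ := hsj
    obtain ⟨y, hyb, hyt⟩ := htj
    have hd1 : d ≤ dist x y := hsep x hxs y hyt
    have hd2 : dist x (c j) < r j := mem_ball.1 hxb
    have hd3 : dist y (c j) < r j := mem_ball.1 hyb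
    have hd4 : dist x y ≤ dist x (c j) + dist (c j) y := dist_triangle _ _ _
    rw [dist_comm (c j) y] at hd4
    have hrR : r j ≤ R := (h1 j).2
    linarith
  · simp only [hrs, hrt, if_pos hsj, if_neg htj, Metric.ball_zero, measure_empty,
      ENNReal.zero_div, add_zero]
    exact le_rfl
  · simp only [hrs, hrt, if_neg hsj, if_pos htj, Metric.ball_zero, measure_empty,
      ENNReal.zero_div, zero_add]
    exact le_rfl
  · simp only [hrs, hrt, if_neg hsj, if_neg htj, Metric.ball_zero, measure_empty,
      ENNReal.zero_div, add_zero]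
    exact zero_le

lemma codimH_add_of_separated {s t : Set X} (h : AreSeparated s t) :
    codimH μ s + codimH μ t ≤ codimH μ (s ∪ t) := by
  obtain ⟨r₀, hr0, hsep⟩ := h
  set dE := min r₀ 1 with hdE
  have hdE0 : dE ≠ 0 := by
    simp only [hdE, ne_eq, min_eq_iff]
    rintro (⟨h1, -⟩ | ⟨h1, -⟩)
    · exact hr0 h1
    · exact one_ne_zero h1
  have hdET : dE ≠ ∞ := (lt_of_le_of_lt (min_le_right _ _) ENNReal.one_lt_top).ne
  set d := dE.toReal with hdd
  have hd : 0 < d := ENNReal.toReal_pos hdE0 hdET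
  have hsep' : ∀ x ∈ s, ∀ y ∈ t, d ≤ dist x y := by
    intro x hx y hy
    have h1 : ENNReal.ofReal d = dE := ENNReal.ofReal_toReal hdET
    have h2 : dE ≤ edist x y := le_trans (min_le_left _ _) (hsep x hx y hy)
    rw [← h1, edist_dist] at h2
    exact (ENNReal.ofReal_le_ofReal_iff dist_nonneg).1 h2
  have hc4 : 0 < d / 4 := by linarith
  rw [codimH_repr (μ := μ) hc4 s, codimH_repr (μ := μ) hc4 t]
  rw [ENNReal.iSup_add_iSup]
  · refine iSup_le fun p => ?_
    exact (hContent_add_le hd hsep' p.2.1 p.2.2).trans (hContent_le_codimH p.2.1)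
  · intro i j
    refine ⟨⟨min i.1 j.1, lt_min i.2.1 j.2.1, (min_le_left _ _).trans i.2.2⟩, ?_⟩
    exact add_le_add (hContent_anti (min_le_left _ _)) (hContent_anti (min_le_right _ _))

/-- The codimension-one Hausdorff measure as an outer measure. -/
def codimHOM (μ : Measure X) [Nonempty X] : OuterMeasure X where
  measureOf := codimH μ
  empty := codimH_empty
  mono := fun h => codimH_mono h
  iUnion_nat := fun s _ => codimH_iUnion_le s

lemma codimHOM_isMetric [Nonempty X] :
    MeasureTheory.OuterMeasure.IsMetric (codimHOM μ) := by
  intro s t hst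
  refine le_antisymm (measure_union_le s t) ?_
  exact codimH_add_of_separated hst

end CodimHMeasure

/-- the complement of a Borel set of finite codimension-one Hausdorff
measure is 1-quasiopen. -/
theorem compl_of_finite_H_measure_quasiopen {X : Type*} [MetricSpace X] [CompleteSpace X] [MeasurableSpace X] [BorelSpace X]
    (μ : Measure X) (Cd CP lam : ℝ) (hCd : 1 ≤ Cd) (hCP : 0 < CP) (hlam : 1 ≤ lam)
    (hdbl : Doubling μ Cd) (hpoin : PoincareInequality μ CP lam)
    (H : Set X) (hH : MeasurableSet H) (hfin : codimH μ H < ∞) :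
    QuasiOpen μ Hᶜ := by
  rcases isEmpty_or_nonempty X with hX | hX
  · intro ε hε
    refine ⟨∅, isOpen_empty, ?_, ?_⟩
    · rw [capa1_empty]; exact hε
    · have h0 : Hᶜ ∪ ∅ = (∅ : Set X) := Set.eq_empty_of_isEmpty _
      rw [h0]; exact isOpen_empty
  · intro ε hε
    set Cd' := ENNReal.ofReal Cd with hCd'
    have hCd'1 : 1 ≤ Cd' := ENNReal.one_le_ofReal.2 hCd
    have hCd'0 : Cd' ≠ 0 := by
      intro h0; rw [h0] at hCd'1; simp at hCd'1
    have hCd'T : Cd' ≠ ∞ := ENNReal.ofReal_ne_top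
    set C : ℝ≥0∞ := 2 * Cd' ^ 3 with hC
    have hC0 : C ≠ 0 := mul_ne_zero (by norm_num) (pow_ne_zero 3 hCd'0)
    have hCT : C ≠ ∞ := ENNReal.mul_ne_top ENNReal.ofNat_ne_top (ENNReal.pow_ne_top hCd'T)
    set δ : ℝ≥0∞ := min 1 (ε / 2 / C) with hδ
    have hδ0 : δ ≠ 0 := by
      have h1 : (0:ℝ≥0∞) < ε / 2 / C :=
        ENNReal.div_pos (ENNReal.div_pos hε.ne' ENNReal.ofNat_ne_top).ne' hCT
      exact (lt_min zero_lt_one h1).ne'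
    have hcar : (inferInstance : MeasurableSpace X) ≤ (codimHOM μ).caratheodory := by
      calc (inferInstance : MeasurableSpace X) = borel X := BorelSpace.measurable_eq
        _ ≤ (codimHOM μ).caratheodory := (codimHOM_isMetric (μ := μ)).borel_le_caratheodory
    set ν := (codimHOM μ).toMeasure hcar with hν
    have hνapp : ∀ {s : Set X}, MeasurableSet s → ν s = codimH μ s := by
      intro s hs
      rw [hν]
      exact MeasureTheory.toMeasure_apply _ _ hs
    set νH := ν.restrict H with hνH
    have hfinH : IsFiniteMeasure νH := by
      constructor
      rw [hνH, Measure.restrict_apply_univ, hνapp hH]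
      exact hfin
    haveI := hfinH
    have hHc0 : νH Hᶜ = 0 := by
      rw [hνH, Measure.restrict_apply hH.compl, Set.compl_inter_self, measure_empty]
    obtain ⟨U, hHcU, hUopen, hUlt⟩ := Set.exists_isOpen_lt_add (μ := νH) Hᶜ
      (by rw [hHc0]; exact ENNReal.zero_ne_top) hδ0
    rw [hHc0, zero_add] at hUlt
    have hsmall : codimH μ (H ∩ U) < δ := by
      have h1 : νH (H ∩ U) ≤ νH U := measure_mono Set.inter_subset_right
      have h2 : νH (H ∩ U) = codimH μ (H ∩ U) := by
        rw [hνH, Measure.restrict_apply (hH.inter hUopen.measurableSet),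
          Set.inter_assoc, Set.inter_comm U H, ← Set.inter_assoc, Set.inter_self]
        exact hνapp (hH.inter hUopen.measurableSet)
      rw [← h2]; exact lt_of_le_of_lt h1 hUlt
    have hcont : hContent μ 1 (H ∩ U) < δ :=
      lt_of_le_of_lt (hContent_le_codimH one_pos) hsmall
    obtain ⟨cc, rr, h01, hcov, hsum⟩ := exists_cover_of_lt hcont
    set G := ⋃ j, ball (cc j) (2 * rr j) with hG
    have hGopen : IsOpen G := isOpen_iUnion fun j => isOpen_ball
    have hHUG : H ∩ U ⊆ G := by
      refine hcov.trans ?_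
      refine Set.iUnion_mono fun j => ?_
      exact ball_subset_ball (by linarith [(h01 j).1])
    refine ⟨G, hGopen, ?_, ?_⟩
    · have hcap : capa1 μ G ≤ C * ∑' j, μ (ball (cc j) (rr j)) / ENNReal.ofReal (rr j) :=
        capa1_le_of_cover hCd hdbl cc rr h01
      have hfinal : C * δ < ε := by
        rcases eq_or_ne ε ∞ with hetop | hetop
        · rw [hetop]
          have h1 : C * δ ≤ C * 1 := mul_le_mul_right (min_le_left _ _) _
          rw [mul_one] at h1
          exact lt_of_le_of_lt h1 hCT.lt_top
        · have hδ2 : δ ≤ ε / 2 / C := min_le_right _ _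
          calc C * δ ≤ C * (ε / 2 / C) := mul_le_mul_right hδ2 _
            _ = ε / 2 := ENNReal.mul_div_cancel hC0 hCT
            _ < ε := ENNReal.half_lt_self hε.ne' hetop
      calc capa1 μ G ≤ C * ∑' j, μ (ball (cc j) (rr j)) / ENNReal.ofReal (rr j) := hcap
        _ ≤ C * δ := mul_le_mul_right hsum.le _
        _ < ε := hfinal
    · have hkey : H ∩ Gᶜ = Uᶜ ∩ Gᶜ := by
        apply Set.Subset.antisymm
        · rintro x ⟨hxH, hxG⟩
          exact ⟨fun hxU => hxG (hHUG ⟨hxH, hxU⟩), hxG⟩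
        · rintro x ⟨hxU, hxG⟩
          refine ⟨?_, hxG⟩
          by_contra hxH
          exact hxU (hHcU hxH)
      have h2 : Hᶜ ∪ G = (H ∩ Gᶜ)ᶜ := by
        rw [Set.compl_inter, compl_compl]
      rw [h2, hkey]
      exact ((hUopen.isClosed_compl).inter hGopen.isClosed_compl).isOpen_compl


end Lahti
end
end

section
/- Let F ⊂ X be such that X ∖ F is 1-quasiopen. Then there exist open sets W_1 ⊃ W_2 ⊃ … ⊃ F such that capa_1( (∩_{j=1}^∞ W_j) ∖ F ) = 0. -/
open MeasureTheory Metric Filter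
open scoped ENNReal NNReal Topology

noncomputable section

namespace Lahti

variable {X : Type*} [MetricSpace X] [MeasurableSpace X]

/-- a set with 1-quasiopen complement is, up to a capacity-null set,
the intersection of a decreasing sequence of open supersets. -/
theorem quasi_Lindelof {X : Type*} [MetricSpace X] [CompleteSpace X] [MeasurableSpace X] [BorelSpace X]
    (μ : Measure X) (Cd CP lam : ℝ) (hCd : 1 ≤ Cd) (hCP : 0 < CP) (hlam : 1 ≤ lam)
    (hdbl : Doubling μ Cd) (hpoin : PoincareInequality μ CP lam)
    (F : Set X) (hF : QuasiOpen μ Fᶜ) :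

    ∃ W : ℕ → Set X, (∀ j, IsOpen (W j)) ∧ (∀ j, W (j+1) ⊆ W j) ∧ (∀ j, F ⊆ W j) ∧
      capa1 μ ((⋂ j, W j) \ F) = 0 := by
  classical
  -- monotonicity of capa1
  have hmono : ∀ A B : Set X, A ⊆ B → capa1 μ A ≤ capa1 μ B := by
    intro A B hAB
    refine le_iInf fun u => le_iInf fun hu => ?_
    exact iInf₂_le u ⟨hu.1, fun x hx => hu.2 x (hAB hx)⟩
  -- choose the open sets G m
  have hε : ∀ m : ℕ, (0 : ℝ≥0∞) < ((m : ℝ≥0∞) + 1)⁻¹ := by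
    intro m
    simp [ENNReal.inv_pos]
  choose G hGopen hGcapa hGU using fun m : ℕ => hF ((m : ℝ≥0∞) + 1)⁻¹ (hε m)
  set D : ℕ → Set X := fun k => F \ G k with hD
  have hDclosed : ∀ k, IsClosed (D k) := by
    intro k
    have : D k = (Fᶜ ∪ G k)ᶜ := by
      simp [hD, Set.diff_eq, Set.compl_union]
    rw [this]
    exact (hGU k).isClosed_compl
  have hDF : ∀ k, D k ⊆ F := fun k => Set.diff_subset
  set W : ℕ → Set X := fun j => ⋂ k ∈ Finset.range (j + 1),
      (G k ∪ Metric.thickening (1 / (j + 1) : ℝ) (D k)) with hW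
  have hWopen : ∀ j, IsOpen (W j) := by
    intro j
    exact isOpen_biInter_finset fun k _ => (hGopen k).union Metric.isOpen_thickening
  have hWanti : ∀ j, W (j + 1) ⊆ W j := by
    intro j x hx
    simp only [hW, Set.mem_iInter, Finset.mem_range] at hx ⊢
    intro k hk
    rcases hx k (by omega) with h | h
    · exact Or.inl h
    · refine Or.inr (Metric.thickening_mono ?_ _ h)
      rw [div_le_div_iff₀ (by positivity) (by positivity)]
      push_cast
      linarith
  have hWF : ∀ j, F ⊆ W j := by
    intro j x hx
    simp only [hW, Set.mem_iInter, Finset.mem_range]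
    intro k hk
    by_cases hxg : x ∈ G k
    · exact Or.inl hxg
    · exact Or.inr (Metric.self_subset_thickening (by positivity) _ ⟨hx, hxg⟩)
  refine ⟨W, hWopen, hWanti, hWF, ?_⟩
  -- the intersection minus F is contained in every G m
  have hsub : ∀ m, (⋂ j, W j) \ F ⊆ G m := by
    intro m x hx
    obtain ⟨hxI, hxF⟩ := hx
    by_contra hxg
    -- then x is in all thickenings of D m
    have key : ∀ j : ℕ, EMetric.infEdist x (D m) ≤ ENNReal.ofReal (1 / (m + j + 1 : ℝ)) := by
      intro j
      have hxW : x ∈ W (m + j) := Set.mem_iInter.mp hxI (m + j)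
      simp only [hW, Set.mem_iInter, Finset.mem_range] at hxW
      rcases hxW m (by omega) with h | h
      · exact absurd h hxg
      · have := Metric.mem_thickening_iff_infEdist_lt.mp h
        refine le_of_lt (lt_of_lt_of_le this ?_)
        refine ENNReal.ofReal_le_ofReal (le_of_eq ?_)
        push_cast
        ring_nf
    have hzero : EMetric.infEdist x (D m) = 0 := by
      refine le_antisymm ?_ zero_le
      have htend : Tendsto (fun j : ℕ => ENNReal.ofReal (1 / (m + j + 1 : ℝ))) atTop (nhds 0) := by
        rw [← ENNReal.ofReal_zero]
        refine ENNReal.tendsto_ofReal ?_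
        have h1 : Tendsto (fun j : ℕ => (1 : ℝ) / (j + 1)) atTop (nhds 0) :=
          tendsto_one_div_add_atTop_nhds_zero_nat
        have h2 : Tendsto (fun j : ℕ => j + m) atTop atTop :=
          tendsto_atTop_atTop_of_monotone (fun a b hab => by omega)
            (fun b => ⟨b, by omega⟩)
        have := h1.comp h2
        refine this.congr fun j => ?_
        simp only [Function.comp]
        push_cast
        ring_nf
      exact ge_of_tendsto htend (Filter.Eventually.of_forall key)
    have : x ∈ closure (D m) := EMetric.mem_closure_iff_infEdist_zero.mpr hzero
    rw [(hDclosed m).closure_eq] at this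
    exact hxF (hDF m this)
  -- conclude
  have hle : ∀ m : ℕ, capa1 μ ((⋂ j, W j) \ F) < ((m : ℝ≥0∞) + 1)⁻¹ :=
    fun m => lt_of_le_of_lt (hmono _ _ (hsub m)) (hGcapa m)
  by_contra hne
  obtain ⟨n, hn⟩ := ENNReal.exists_inv_nat_lt hne
  have h1 : ((n : ℝ≥0∞) + 1)⁻¹ ≤ ((n : ℝ≥0∞))⁻¹ :=
    ENNReal.inv_le_inv.mpr (le_add_of_nonneg_right zero_le)
  exact absurd ((hle n).trans_le h1) (not_lt.mpr hn.le)

end Lahti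
end
end
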